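/- arXiv:2212.00395 — 7 statements merged into one kernel-verified Lean document; each statement's English description precedes it below -/
import Mathlib

section
/- Let K be a field, S = K[x_1,…,x_n] the standard graded polynomial ring, and let I ⊆ S be a graded ideal minimally generated by homogeneous elements f_1,…,f_m all of the same degree d. Assume that the relation module of I is generated by linear relations, i.e., the kernel of the S-module homomorphism S^m → S sending the i-th standard basis vector e_i to f_i is generated by homogeneous elements of degree d+1 (relations all of whose entries are linear forms). Then for every i ∈ {1,…,m}, the colon ideal (f_1,…,f_{i−1},f_{i+1},…,f_m) : f_i is generated by homogeneous elements of degree 1. -/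
open MvPolynomial

/-- **Lemma 1.1 (Ficarra–Herzog).**  Let `S = K[x_1,…,x_n]` and let `I` be a graded ideal
minimally generated by homogeneous elements `f 0, …, f (m-1)`, all of degree `d`.  If the
relation module of `I` (the kernel of `S^m → S`, `e i ↦ f i`) is generated by linear
relations (homogeneous relations of degree `d + 1`, i.e. relations all of whose entries
are homogeneous of degree `1`), then for each `i` the colon ideal
`(f_0,…,f_{i-1},f_{i+1},…,f_{m-1}) : f_i` is generated by homogeneous elements of
degree `1`. -/
theorem colon_generated_by_linear_forms
    {K : Type*} [Field K] {n m : ℕ} (d : ℕ)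
    (f : Fin m → MvPolynomial (Fin n) K)
    (I : Ideal (MvPolynomial (Fin n) K))
    (hI : I = Ideal.span (Set.range f))
    (hhom : ∀ i, (f i).IsHomogeneous d)
    (hmin : ∀ i, f i ∉ Ideal.span (f '' {j | j ≠ i}))
    (hrel : ∃ T : Set (Fin m → MvPolynomial (Fin n) K),
      (∀ r ∈ T, (∑ i, r i * f i = 0) ∧ ∀ i, (r i).IsHomogeneous 1) ∧
      ∀ r : Fin m → MvPolynomial (Fin n) K, (∑ i, r i * f i = 0) →
        r ∈ Submodule.span (MvPolynomial (Fin n) K) T) :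
    ∀ i : Fin m, ∃ T : Set (MvPolynomial (Fin n) K),
      (∀ p ∈ T, p.IsHomogeneous 1) ∧
      (Ideal.span (f '' {j | j ≠ i})).colon (Ideal.span {f i}) = Ideal.span T := by
  classical
  obtain ⟨T, hT1, hT2⟩ := hrel
  intro i
  refine ⟨(fun t => t i) '' T, ?_, ?_⟩
  · rintro p ⟨t, ht, rfl⟩
    exact (hT1 t ht).2 i
  · have hrange : Set.range (fun j => if j = i then 0 else f j) =
        insert (0 : MvPolynomial (Fin n) K) (f '' {j | j ≠ i}) := by
      ext p
      simp only [Set.mem_range, Set.mem_insert_iff, Set.mem_image, Set.mem_setOf_eq]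
      constructor
      · rintro ⟨j, hj⟩
        by_cases h : j = i
        · left; simp only [h, if_pos rfl] at hj; exact hj.symm
        · right; exact ⟨j, h, by simpa [h] using hj⟩
      · rintro (rfl | ⟨j, hj, rfl⟩)
        · exact ⟨i, by simp⟩
        · exact ⟨j, by simp [hj]⟩
    have hspan : Ideal.span (f '' {j | j ≠ i})
        = Ideal.span (Set.range fun j => if j = i then 0 else f j) := by
      rw [hrange]
      exact (Submodule.span_insert_zero).symm
    apply le_antisymm
    · intro g hg
      rw [Ideal.mem_colon_span_singleton, hspan, Ideal.span,
        Submodule.mem_span_range_iff_exists_fun _] at hg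
      obtain ⟨c, hc⟩ := hg
      set r : Fin m → MvPolynomial (Fin n) K :=
        fun j => if j = i then -g else c j with hr
      have hsum : ∑ j, r j * f j = 0 := by
        rw [Fintype.sum_eq_add_sum_compl i (fun j => r j * f j)]
        have h2 : ∑ j ∈ ({i}ᶜ : Finset (Fin m)), r j * f j
            = ∑ j ∈ ({i}ᶜ : Finset (Fin m)),
                c j • (if j = i then 0 else f j) := by
          refine Finset.sum_congr rfl fun j hj => ?_
          have hji : j ≠ i := by simpa using hj
          simp [hr, hji, smul_eq_mul]
        have h3 : ∑ j, c j • (if j = i then (0 : MvPolynomial (Fin n) K) else f j)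
            = ∑ j ∈ ({i}ᶜ : Finset (Fin m)), c j • (if j = i then 0 else f j) := by
          rw [Fintype.sum_eq_add_sum_compl i]
          simp
        rw [h2, ← h3, hc]
        simp [hr]
      have hmem := hT2 r hsum
      have hproj := Submodule.apply_mem_span_image_of_mem_span
        (LinearMap.proj (R := MvPolynomial (Fin n) K)
          (φ := fun _ : Fin m => MvPolynomial (Fin n) K) i) hmem
      simp only [LinearMap.proj_apply] at hproj
      have hri : r i = -g := by simp [hr]
      rw [hri] at hproj
      have := neg_mem hproj
      simpa using this
    · rw [Ideal.span_le]
      rintro p ⟨t, ht, rfl⟩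
      rw [SetLike.mem_coe, Ideal.mem_colon_span_singleton]
      have hsum := (hT1 t ht).1
      rw [Fintype.sum_eq_add_sum_compl i (fun j => t j * f j)] at hsum
      have heq : t i * f i = -∑ j ∈ ({i}ᶜ : Finset (Fin m)), t j * f j :=
        eq_neg_of_add_eq_zero_left hsum
      rw [heq]
      refine neg_mem (Ideal.sum_mem _ fun j hj => ?_)
      have hji : j ≠ i := by simpa using hj
      exact Ideal.mul_mem_left _ _ (Ideal.subset_span ⟨j, hji, rfl⟩)
end

section
/- Let I ⊆ S = K[x_1,…,x_n] be a monomial ideal generated in a single degree that has linear quotients, and let u_1,…,u_m be its minimal monomial generators. Then for every i ∈ {1,…,m}, the colon ideal (u_1,…,u_{i−1},u_{i+1},…,u_m) : u_i is generated by a subset of the variables. -/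
/-!
Write the generators as `x^{a_i}`. A colon ideal `(x^{a_j} : j ∈ S) : x^c` is generated by
variables iff every `a_j` exceeds `c` in some coordinate `x` for which `x · x^c` already lies in
`(x^{a_j} : j ∈ S)`. Fix `i` (in the admissible order) and treat `j ≠ i` by induction on `j`.
For `j < i` this is the linear quotient condition at `i`. For `j > i`, the condition at `j`
yields `y` with `a_j(y) < a_i(y)` and `k < j` with `a_k ≤ a_j + e_y`. If `k = i`, equal degrees
force `a_j = a_i + e_z - e_y` for some `z`, and `z` works with `j` itself as witness. If `k ≠ i`,
the variable found for `k` works for `j` as well.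
-/

open MvPolynomial

/-- An ideal of `K[x_1,…,x_n]` is *generated by variables* if it is the span of the
image of a subset of the variables. -/
def genByVars {K : Type*} [Field K] {n : ℕ} (I : Ideal (MvPolynomial (Fin n) K)) : Prop :=
  ∃ T : Set (Fin n), I = Ideal.span (MvPolynomial.X '' T)
/-- A polynomial is a monomial (with coefficient `1`). -/
def IsMonomialElt {K : Type*} [Field K] {n : ℕ} (p : MvPolynomial (Fin n) K) : Prop :=
  ∃ a : Fin n →₀ ℕ, p = MvPolynomial.monomial a 1

open Finsupp Function Set

theorem Finsupp.exists_lt_and_le_add_single {σ : Type*} {a b : σ →₀ ℕ} {y : σ}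
    (hle : a ≤ b + single y 1) (hdeg : a.degree = b.degree) (hne : a ≠ b) :
    ∃ z, a z < b z ∧ b ≤ a + single z 1 := by
  -- both sides are `a ⊔ b`
  have hsup : (a - b) + b = (b - a) + a := by
    ext x
    simp only [coe_add, coe_tsub, Pi.add_apply, Pi.sub_apply]
    omega
  have hdeg' : (a - b).degree = (b - a).degree := by
    have := congrArg degree hsup
    simp only [map_add] at this
    omega
  have hba : (b - a).degree = 1 := by
    have h1 : (a - b).degree ≤ 1 := by
      simpa using degree_mono (tsub_le_iff_left.mpr hle)
    have h0 : (b - a).degree ≠ 0 := fun h0 => hne <| le_antisymm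
      (tsub_eq_zero_iff_le.mp ((degree_eq_zero_iff _).mp (hdeg'.trans h0)))
      (tsub_eq_zero_iff_le.mp ((degree_eq_zero_iff _).mp h0))
    omega
  obtain ⟨z, hz⟩ : b - a ∈ range (single · 1) := range_single_one ▸ hba
  refine ⟨z, ?_, tsub_le_iff_left.mp hz.ge⟩
  have hz' := congrArg (· z) hz
  simp only [single_eq_same, coe_tsub, Pi.sub_apply] at hz'
  omega

/-- `(x^t : t ∈ A) : x^c` is generated by variables, in the combinatorial form of
`MvPolynomial.exists_colon_eq_span_X_iff`. -/
def HasLinearColon {σ : Type*} (A : Set (σ →₀ ℕ)) (c : σ →₀ ℕ) : Prop :=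
  ∀ s ∈ A, ∃ x, c x < s x ∧ ∃ t ∈ A, t ≤ c + single x 1

theorem hasLinearColon_compl_of_hasLinearColon_Iio {σ ι : Type*} [LinearOrder ι]
    [WellFoundedLT ι] {a : ι → σ →₀ ℕ} (ha : Injective a)
    (hdeg : ∀ i j, (a i).degree = (a j).degree)
    (hlq : ∀ i, HasLinearColon (a '' Iio i) (a i)) (i : ι) :
    HasLinearColon (a '' {i}ᶜ) (a i) := by
  simp only [HasLinearColon, forall_mem_image, exists_mem_image, mem_Iio,
    mem_compl_singleton_iff] at hlq ⊢
  intro j hji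
  induction j using WellFoundedLT.induction with | _ j ih =>
  rcases hji.lt_or_gt with hlt | hgt
  · obtain ⟨x, hx, k, hk, hle⟩ := hlq i hlt
    exact ⟨x, hx, k, hk.ne, hle⟩
  obtain ⟨y, hy, k, hkj, hk⟩ := hlq j hgt
  by_cases hki : k = i
  · subst hki
    obtain ⟨z, hz, hle⟩ := exists_lt_and_le_add_single hk (hdeg _ _) (ha.ne hgt.ne)
    exact ⟨z, hz, j, hgt.ne', hle⟩
  -- otherwise the variable serving `k` serves `j` too: it is not `y`, where `a k ≤ a i`
  obtain ⟨x, hx, l, hli, hl⟩ := ih k hkj hki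
  refine ⟨x, ?_, l, hli, hl⟩
  have hkx := hk x
  by_cases hxy : x = y
  · subst hxy
    simp only [Finsupp.add_apply, single_eq_same] at hkx
    omega
  · simp only [Finsupp.add_apply, single_eq_of_ne hxy, add_zero] at hkx
    omega

namespace MvPolynomial

variable {σ R : Type*} [CommSemiring R] [Nontrivial R]

theorem monomial_mem_span_monomial_image_iff {A : Set (σ →₀ ℕ)} {c : σ →₀ ℕ} :
    monomial c (1 : R) ∈ Ideal.span ((fun s => monomial s 1) '' A) ↔ ∃ s ∈ A, s ≤ c := by
  classical
  simp [mem_ideal_span_monomial_image, support_monomial]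

theorem monomial_mem_colon_span_monomial_iff {A : Set (σ →₀ ℕ)} {c e : σ →₀ ℕ} :
    monomial e (1 : R) ∈ (Ideal.span ((fun s => monomial s 1) '' A)).colon
      (Ideal.span {monomial c (1 : R)}) ↔ ∃ t ∈ A, t ≤ c + e := by
  rw [Ideal.mem_colon_span_singleton, monomial_mul, one_mul, add_comm,
    monomial_mem_span_monomial_image_iff]

theorem exists_colon_eq_span_X_iff {ι : Type*} (a : ι → σ →₀ ℕ) (S : Set ι)
    (c : σ →₀ ℕ) :
    (∃ T : Set σ, (Ideal.span ((fun j => monomial (a j) (1 : R)) '' S)).colon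
      (Ideal.span {monomial c (1 : R)}) = Ideal.span (X '' T)) ↔ HasLinearColon (a '' S) c := by
  classical
  rw [← Set.image_image (fun s => monomial s (1 : R)) a S]
  set J := Ideal.span ((fun s => monomial s (1 : R)) '' (a '' S))
  constructor
  · rintro ⟨T, hT⟩ s hs
    have hmem : monomial (s - c) (1 : R) ∈ J.colon (Ideal.span {monomial c (1 : R)}) :=
      monomial_mem_colon_span_monomial_iff.mpr ⟨s, hs, le_add_tsub⟩
    rw [hT, mem_ideal_span_X_image] at hmem
    obtain ⟨x, hxT, hx⟩ := hmem (s - c) (by simp)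
    have hX : monomial (single x 1) (1 : R) ∈ J.colon (Ideal.span {monomial c (1 : R)}) :=
      hT ▸ Ideal.subset_span ⟨x, hxT, rfl⟩
    refine ⟨x, ?_, monomial_mem_colon_span_monomial_iff.mp hX⟩
    simp only [coe_tsub, Pi.sub_apply] at hx
    omega
  · intro h
    refine ⟨{x | ∃ t ∈ a '' S, t ≤ c + single x 1}, le_antisymm ?_ ?_⟩
    · intro p hp
      rw [Ideal.mem_colon_span_singleton, mem_ideal_span_monomial_image] at hp
      rw [mem_ideal_span_X_image]
      intro b hb
      obtain ⟨s, hs, hsb⟩ := hp (b + c) (by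
        rwa [mem_support_iff, coeff_mul_monomial, mul_one, ← mem_support_iff])
      obtain ⟨x, hx, hX⟩ := h s hs
      refine ⟨x, hX, ?_⟩
      have := hsb x
      simp only [Finsupp.add_apply] at this
      omega
    · rw [Ideal.span_le]
      rintro _ ⟨x, hx, rfl⟩
      exact monomial_mem_colon_span_monomial_iff.mpr hx

end MvPolynomial

/-- **Corollary 1.2 (Ficarra–Herzog).**  Let `I` be a monomial ideal generated in a single
degree `d` with linear quotients, with minimal monomial generators `u 0, …, u (m-1)`
(pairwise non-dividing monomials).  Then for every `i`, the colon ideal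
`(u_0,…,u_{i-1},u_{i+1},…,u_{m-1}) : u_i` is generated by a subset of the variables. -/
theorem colon_of_all_but_one_generated_by_variables
    {K : Type*} [Field K] {n m : ℕ} (d : ℕ)
    (u : Fin m → MvPolynomial (Fin n) K)
    (hmon : ∀ i, IsMonomialElt (u i))
    (hdeg : ∀ i, (u i).totalDegree = d)
    (hmin : ∀ i j, i ≠ j → ¬ u i ∣ u j)
    (hlq : ∃ σ : Equiv.Perm (Fin m), ∀ i : Fin m,
      genByVars ((Ideal.span ((fun j => u (σ j)) '' {j | j < i})).colon
        (Ideal.span {u (σ i)}))) :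
    ∀ i : Fin m,
      genByVars ((Ideal.span (u '' {j | j ≠ i})).colon (Ideal.span {u i})) := by
  obtain ⟨σ, hσ⟩ := hlq
  choose b hb using hmon
  obtain rfl : u = fun j => monomial (b j) 1 := funext hb
  have hdegree (i j : Fin m) : (b i).degree = (b j).degree := by
    have hi := hdeg i
    have hj := hdeg j
    rw [totalDegree_monomial _ one_ne_zero] at hi hj
    exact hi.trans hj.symm
  have hinj : Injective b := fun i j h => by_contra fun hij => hmin i j hij (by simp [h])
  intro i
  have key := hasLinearColon_compl_of_hasLinearColon_Iio (a := b ∘ σ) (hinj.comp σ.injective)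
    (fun _ _ => hdegree _ _) (fun j => (exists_colon_eq_span_X_iff _ _ _).mp (hσ j)) (σ.symm i)
  rw [image_comp, σ.image_compl, image_singleton, comp_apply, σ.apply_symm_apply] at key
  exact (exists_colon_eq_span_X_iff _ _ _).mpr key
end

section
/- Let I ⊆ S = K[x_1,…,x_n] be a monomial ideal generated in a single degree that has linear quotients, and fix an admissible order u_1,…,u_m of its minimal monomial generators. Then the first homological shift ideal HS_1(I), namely the monomial ideal generated by all products u_i·x_j with 1 ≤ i ≤ m and j ∈ set(u_i), has linear quotients. -/
open MvPolynomial

/-- A monomial ideal has *linear quotients* if its minimal monomial generators admit an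
ordering `u 0, u 1, …` such that each colon ideal `(u_0,…,u_{i-1}) : u_i` is generated by a
subset of the variables.  (The conditions that the `u i` are monomials, pairwise
non-dividing, and generate `I` say exactly that they are the minimal monomial generators
of `I`.) -/
def HasLinearQuotients {K : Type*} [Field K] {n : ℕ}
    (I : Ideal (MvPolynomial (Fin n) K)) : Prop :=
  ∃ (m : ℕ) (u : Fin m → MvPolynomial (Fin n) K),
    (∀ i, IsMonomialElt (u i)) ∧
    (∀ i j, i ≠ j → ¬ u i ∣ u j) ∧
    Ideal.span (Set.range u) = I ∧
    ∀ i : Fin m,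
      genByVars ((Ideal.span (u '' {j | j < i})).colon (Ideal.span {u i}))

/-!
Write `u i = x^(a i)`. All colon ideals involved are monomial ideals, so `(v_1,…,v_{r-1}) : v_r`
is generated by variables iff every monomial `c` with `v_q ∣ c·v_r` for some `q < r` is divisible
by a variable `x_l` with `x_l·v_r ∈ (v_1,…,v_{r-1})`. For `I` this says: for `k < i` some
`s ∈ set(u_i)` has `x_s ∣ u_k / gcd(u_k, u_i)`.

List the generators `u_i x_j` of `HS_1(I)` lexicographically in `(i, j)`, keeping first
occurrences, and let `W` be a common multiple of `w = u_i x_j` and of an earlier `u_{i'} x_{j'}`.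
If `i' = i`, the variable `x_{j'}` works. If `i' < i`, induct on `i'`: unless `u_{i'} x_{j'}`
divides some `x_l w`, pick `u_{k₃} ∣ u_{i'} x_{j'}` with `k₃ < i'` and `u_{k₂} ∣ w` with `k₂ < i`.
As all `u_k` have the same degree, `w = u_{k₂} x_r`, and `r ∉ set(u_{k₂})` because `w` is a first
occurrence. If `k₃ < k₂`, the variable `x_s` given by the pair `(k₂, k₃)` works; if `k₂ < k₃`,
the pair `(k₃, k₂)` gives a generator `u_{k₃} x_s` dividing `W`, and the induction applies.
-/

open MvPolynomial Finsupp

namespace Finsupp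

variable {σ : Type*}

theorem eq_of_le_of_degree_eq {f g : σ →₀ ℕ} (h : f ≤ g) (hd : f.degree = g.degree) : f = g := by
  obtain ⟨r, rfl⟩ := exists_add_of_le h
  rw [map_add, left_eq_add, degree_eq_zero_iff] at hd
  rw [hd, add_zero]

theorem exists_eq_add_single_of_le {f g : σ →₀ ℕ} (h : f ≤ g) (hd : g.degree = f.degree + 1) :
    ∃ q, g = f + single q 1 := by
  obtain ⟨r, rfl⟩ := exists_add_of_le h
  rw [map_add, add_right_inj] at hd
  obtain ⟨q, hq⟩ : ∃ q, r q ≠ 0 := by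
    by_contra! hr
    simp [show r = 0 from ext hr] at hd
  have hqr : single q 1 ≤ r := single_le_iff.mpr (Nat.one_le_iff_ne_zero.mpr hq)
  exact ⟨q, by rw [eq_of_le_of_degree_eq hqr (by rw [hd, degree_single])]⟩

theorem lt_apply_of_le_add_single {f g : σ →₀ ℕ} {l : σ} (hd : f.degree = g.degree) (hne : f ≠ g)
    (h : f ≤ g + single l 1) : g l < f l := by
  by_contra! hl
  refine hne (eq_of_le_of_degree_eq (fun x => ?_) hd)
  by_cases hx : x = l
  · exact hx ▸ hl
  · simpa [single_apply, Ne.symm hx] using h x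

theorem add_single_le_iff {f g : σ →₀ ℕ} {l : σ} : f + single l 1 ≤ g ↔ f ≤ g ∧ f l < g l := by
  refine ⟨fun h => ⟨le_self_add.trans h, by simpa using h l⟩, fun ⟨h, hl⟩ x => ?_⟩
  by_cases hx : x = l
  · subst hx; simpa using hl
  · simpa [single_apply, Ne.symm hx] using h x

end Finsupp

namespace MvPolynomial

variable {σ K : Type*}

theorem monomial_one_mem_colon_iff [CommSemiring K] [Nontrivial K] {S : Set (σ →₀ ℕ)}
    {c w : σ →₀ ℕ} :
    monomial c (1 : K) ∈
        (Ideal.span ((fun s => monomial s (1 : K)) '' S)).colon (Ideal.span {monomial w (1 : K)}) ↔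
      ∃ s ∈ S, s ≤ w + c := by
  classical
  rw [Ideal.mem_colon_span_singleton, monomial_mul, one_mul,
    mem_ideal_span_monomial_image, support_monomial, if_neg one_ne_zero]
  simp [add_comm]

theorem genByVars_colon_iff [Field K] {n : ℕ} {S : Set (Fin n →₀ ℕ)} {w : Fin n →₀ ℕ} :
    genByVars ((Ideal.span ((fun s => monomial s (1 : K)) '' S)).colon
        (Ideal.span {monomial w (1 : K)})) ↔
      ∀ c, (∃ s ∈ S, s ≤ w + c) → ∃ l, c l ≠ 0 ∧ ∃ s ∈ S, s ≤ w + single l 1 := by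
  set J := (Ideal.span ((fun s => monomial s (1 : K)) '' S)).colon (Ideal.span {monomial w (1 : K)})
  have hX : ∀ l, X l ∈ J ↔ ∃ s ∈ S, s ≤ w + single l 1 := fun l => monomial_one_mem_colon_iff
  constructor
  · rintro ⟨T, hT⟩ c hc
    have hcJ : monomial c (1 : K) ∈ J := monomial_one_mem_colon_iff.mpr hc
    rw [hT] at hcJ
    obtain ⟨l, hlT, hcl⟩ := mem_ideal_span_X_image.mp hcJ c (by simp)
    refine ⟨l, hcl, (hX l).mp ?_⟩
    rw [hT]
    exact Ideal.subset_span ⟨l, hlT, rfl⟩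
  · intro h
    refine ⟨{l | X l ∈ J}, le_antisymm (fun p hp => ?_) (Ideal.span_le.mpr ?_)⟩
    · rw [mem_ideal_span_X_image]
      intro c hc
      rw [Ideal.mem_colon_span_singleton, mem_ideal_span_monomial_image] at hp
      obtain ⟨l, hcl, hl⟩ := h c (by
        refine hp (c + w) ?_ |>.imp fun s ⟨hs, hle⟩ => ⟨hs, add_comm w c ▸ hle⟩
        rwa [mem_support_iff, coeff_mul_monomial, mul_one, ← mem_support_iff])
      exact ⟨l, (hX l).mpr hl, hcl⟩
    · rintro _ ⟨l, hl, rfl⟩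
      exact hl

end MvPolynomial

section LinearQuotientOrder

variable {ι σ : Type*}

/-- Linear quotients in exponent form for the sequence `v` on `G`, which may repeat vectors:
only first occurrences are tested. -/
def IsLinearQuotientOrder [LT ι] (G : Set ι) (v : ι → σ →₀ ℕ) : Prop :=
  ∀ p ∈ G, (∀ q ∈ G, q < p → v q ≠ v p) → ∀ c : σ →₀ ℕ,
    (∃ q ∈ G, q < p ∧ v q ≤ v p + c) → ∃ l, c l ≠ 0 ∧ ∃ q ∈ G, q < p ∧ v q ≤ v p + single l 1

variable [LinearOrder ι]

theorem exists_first_occurrence [WellFoundedLT ι] {β : Type*} {G : Set ι} (v : ι → β) {p : ι}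
    (hp : p ∈ G) : ∃ p₀ ∈ G, (∀ q ∈ G, q < p₀ → v q ≠ v p₀) ∧ p₀ ≤ p ∧ v p₀ = v p := by
  induction p using WellFoundedLT.induction with
  | ind p IH =>
    by_cases h : ∀ q ∈ G, q < p → v q ≠ v p
    · exact ⟨p, hp, h, le_rfl, rfl⟩
    · push Not at h
      obtain ⟨q, hq, hqp, hvq⟩ := h
      obtain ⟨q₀, hq₀, hfirst, hq₀q, hv⟩ := IH q hqp hq
      exact ⟨q₀, hq₀, hfirst, hq₀q.trans hqp.le, hv.trans hvq⟩

theorem Finset.image_orderEmbOfFin_Iio {s : Finset ι} {k : ℕ} (h : s.card = k) (t : Fin k) :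
    s.orderEmbOfFin h '' Set.Iio t = {q | q ∈ s ∧ q < s.orderEmbOfFin h t} := by
  ext q
  constructor
  · rintro ⟨t', ht', rfl⟩
    exact ⟨s.orderEmbOfFin_mem h t', (s.orderEmbOfFin h).lt_iff_lt.mpr ht'⟩
  · rintro ⟨hq, hqt⟩
    obtain ⟨t', rfl⟩ : q ∈ Set.range (s.orderEmbOfFin h) := by
      rwa [Finset.range_orderEmbOfFin]
    exact ⟨t', (s.orderEmbOfFin h).lt_iff_lt.mp hqt, rfl⟩

theorem hasLinearQuotients_span_of_isLinearQuotientOrder {K : Type*} [Field K] {n d : ℕ}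
    [Fintype ι] {G : Set ι} {v : ι → Fin n →₀ ℕ} (hdeg : ∀ p ∈ G, (v p).degree = d)
    (hv : IsLinearQuotientOrder G v) :
    HasLinearQuotients (Ideal.span ((fun s => monomial s (1 : K)) '' (v '' G))) := by
  classical
  set F : Finset ι := {p | p ∈ G ∧ ∀ q ∈ G, q < p → v q ≠ v p}
  have hF : ∀ {p}, p ∈ F ↔ p ∈ G ∧ ∀ q ∈ G, q < p → v q ≠ v p := by simp [F]
  have hfirst : ∀ q ∈ G, ∃ q₀ ∈ F, q₀ ≤ q ∧ v q₀ = v q := fun q hq =>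
    let ⟨q₀, hq₀, hfirst, hq₀q, hv⟩ := exists_first_occurrence v hq
    ⟨q₀, hF.mpr ⟨hq₀, hfirst⟩, hq₀q, hv⟩
  have hbelow : ∀ p, v '' {q | q ∈ F ∧ q < p} = v '' {q | q ∈ G ∧ q < p} := by
    refine fun p => subset_antisymm (Set.image_mono fun q hq => ⟨(hF.mp hq.1).1, hq.2⟩) ?_
    rintro _ ⟨q, ⟨hq, hqp⟩, rfl⟩
    obtain ⟨q₀, hq₀, hq₀q, hv⟩ := hfirst q hq
    exact ⟨q₀, ⟨hq₀, hq₀q.trans_lt hqp⟩, hv⟩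
  set e := F.orderEmbOfFin rfl
  have he : ∀ t, e t ∈ G ∧ ∀ q ∈ G, q < e t → v q ≠ v (e t) :=
    fun t => hF.mp (F.orderEmbOfFin_mem rfl t)
  refine ⟨F.card, fun t => monomial (v (e t)) 1, fun t => ⟨_, rfl⟩, ?_, ?_, fun t => ?_⟩
  · intro t t' htt' hdvd
    obtain ⟨hle | hle, -⟩ := monomial_dvd_monomial.mp hdvd
    · exact one_ne_zero hle
    have hveq := Finsupp.eq_of_le_of_degree_eq hle (by rw [hdeg _ (he t).1, hdeg _ (he t').1])
    refine htt' (e.injective ?_)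
    rcases lt_trichotomy (e t) (e t') with h | h | h
    · exact absurd hveq ((he t').2 _ (he t).1 h)
    · exact h
    · exact absurd hveq.symm ((he t).2 _ (he t').1 h)
  · have hrange : Set.range (v ∘ e) = v '' G := by
      rw [Set.range_comp, F.range_orderEmbOfFin]
      refine subset_antisymm (Set.image_mono fun q hq => (hF.mp hq).1) ?_
      rintro _ ⟨q, hq, rfl⟩
      obtain ⟨q₀, hq₀, -, hv⟩ := hfirst q hq
      exact ⟨q₀, hq₀, hv⟩
    rw [← hrange, ← Set.range_comp]
    rfl
  · rw [show (fun t => monomial (v (e t)) (1 : K)) = (fun s => monomial s 1) ∘ v ∘ e from rfl,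
      Set.image_comp, Set.image_comp, Set.Iio_def, F.image_orderEmbOfFin_Iio, hbelow]
    refine genByVars_colon_iff.mpr ?_
    simp only [Set.exists_mem_image, Set.mem_ofPred_eq, and_assoc]
    exact hv (e t) (he t).1 (he t).2

end LinearQuotientOrder

section FirstHomologicalShift

variable {ι σ : Type*} [LinearOrder ι] (a : ι → σ →₀ ℕ)

/-- `set(u_i)` for `u_i = x^(a i)`. -/
def colonVars (i : ι) : Set σ := {j | ∃ k < i, a k ≤ a i + single j 1}

variable {a} {d : ℕ}

theorem exists_lt_apply_and_le_add_single [WellFoundedLT ι] (hdeg : ∀ k, (a k).degree = d)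
    (hadm : ∀ i k, k < i → ∃ s ∈ colonVars a i, a i s < a k s) {i : ι} {j : σ}
    (hj : j ∈ colonVars a i)
    (hfirst : ∀ k < i, ∀ t ∈ colonVars a k, a k + single t 1 ≠ a i + single j 1)
    {W : σ →₀ ℕ} (hW : a i + single j 1 ≤ W) {i' : ι} (hi' : i' < i) {j' : σ}
    (hj' : j' ∈ colonVars a i') (hle : a i' + single j' 1 ≤ W) :
    ∃ l, (a i + single j 1 : σ →₀ ℕ) l < W l ∧
      ∃ k < i, ∃ t ∈ colonVars a k, a k + single t 1 ≤ a i + single j 1 + single l 1 := by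
  set w := a i + single j 1 with hw
  have hdegw : w.degree = d + 1 := by rw [hw, map_add, hdeg, degree_single]
  have hdeg_add : ∀ k t, (a k + single t 1).degree = d + 1 := fun k t => by
    rw [map_add, hdeg, degree_single]
  obtain ⟨k₂, hk₂, hk₂w⟩ := hj
  have of_le_w : ∀ k < i, a k ≤ w → ∀ k' < k, a k' ≤ W → ∃ l, w l < W l ∧
      ∃ k < i, ∃ t ∈ colonVars a k, a k + single t 1 ≤ w + single l 1 := by
    intro k hk hkw k' hk' hk'W
    obtain ⟨r, hr⟩ := Finsupp.exists_eq_add_single_of_le hkw (by rw [hdegw, hdeg])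
    obtain ⟨τ, hτ, hlt⟩ := hadm k k' hk'
    have hτr : τ ≠ r := by
      rintro rfl
      exact hfirst k hk τ hτ hr.symm
    refine ⟨τ, ?_, k, hk, τ, hτ, add_le_add_left hkw _⟩
    calc w τ = a k τ := by simp [hr, hτr.symm]
      _ < a k' τ := hlt
      _ ≤ W τ := hk'W τ
  induction i' using WellFoundedLT.induction generalizing j' with
  | ind i' IH =>
    by_cases hA : ∃ l, a i' + single j' 1 ≤ w + single l 1
    · obtain ⟨l, hl⟩ := hA
      have hne := hfirst i' hi' j' hj'
      refine ⟨l, ?_, i', hi', j', hj', hl⟩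
      exact (Finsupp.lt_apply_of_le_add_single (by rw [hdeg_add, hdegw]) hne hl).trans_le (hle l)
    push Not at hA
    obtain ⟨k₃, hk₃, hk₃le⟩ := hj'
    obtain ⟨q, hq⟩ := Finsupp.exists_eq_add_single_of_le hk₃le (by rw [hdeg_add, hdeg])
    have hk₃w : ¬ a k₃ ≤ w := fun h => hA q (hq ▸ add_le_add_left h _)
    rcases lt_trichotomy k₃ k₂ with h | rfl | h
    · exact of_le_w k₂ hk₂ hk₂w k₃ h (hk₃le.trans hle)
    · exact absurd hk₂w hk₃w
    · obtain ⟨τ, hτ, hlt⟩ := hadm k₃ k₂ h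
      refine IH k₃ hk₃ (hk₃.trans hi') hτ (Finsupp.add_single_le_iff.mpr ⟨hk₃le.trans hle, ?_⟩)
      exact hlt.trans_le ((hk₂w τ).trans (hW τ))

theorem isLinearQuotientOrder_firstShift [WellFoundedLT ι] [LinearOrder σ]
    (hdeg : ∀ k, (a k).degree = d) (hadm : ∀ i k, k < i → ∃ s ∈ colonVars a i, a i s < a k s) :
    IsLinearQuotientOrder {p : ι ×ₗ σ | (ofLex p).2 ∈ colonVars a (ofLex p).1}
      (fun p => a (ofLex p).1 + single (ofLex p).2 1) := by
  intro p hj hfirst c ⟨q, hj', hlt, hle⟩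
  obtain ⟨⟨i, j⟩, rfl⟩ := toLex.surjective p
  obtain ⟨⟨i', j'⟩, rfl⟩ := toLex.surjective q
  simp only [Set.mem_ofPred_eq, ofLex_toLex] at hj hj' hle
  have hfirst' : ∀ k < i, ∀ t ∈ colonVars a k, a k + single t 1 ≠ a i + single j 1 :=
    fun k hk t ht => hfirst (toLex (k, t)) ht (Prod.Lex.toLex_lt_toLex.mpr (Or.inl hk))
  rcases Prod.Lex.toLex_lt_toLex.mp hlt with hi | ⟨rfl, hj'j⟩
  · obtain ⟨l, hl, k, hk, t, ht, hkt⟩ :=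
      exists_lt_apply_and_le_add_single hdeg hadm hj hfirst' le_self_add hi hj' hle
    refine ⟨l, fun hc => ?_, toLex (k, t), ht, Prod.Lex.toLex_lt_toLex.mpr (Or.inl hk), hkt⟩
    simp [hc] at hl
  · refine ⟨j', fun hc => ?_, toLex (i', j'), hj', hlt, ?_⟩
    · simpa [hc, (show j' < j from hj'j).ne'] using hle j'
    · show a i' + single j' 1 ≤ a i' + single j 1 + single j' 1
      exact add_le_add_left le_self_add _

end FirstHomologicalShift

section Admissible

variable {K ι : Type*} [Field K] [LinearOrder ι] {n : ℕ} {a : ι → Fin n →₀ ℕ}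

theorem X_mem_colon_iff_mem_colonVars {i : ι} {j : Fin n} :
    X j ∈ (Ideal.span ((fun s => monomial s (1 : K)) '' (a '' {k | k < i}))).colon
        (Ideal.span {monomial (a i) (1 : K)}) ↔ j ∈ colonVars a i := by
  rw [X, monomial_one_mem_colon_iff]
  simp [colonVars]

theorem exists_mem_colonVars_lt_of_genByVars
    (hadm : ∀ i, genByVars ((Ideal.span ((fun s => monomial s (1 : K)) '' (a '' {k | k < i}))).colon
        (Ideal.span {monomial (a i) (1 : K)})))
    {i k : ι} (hk : k < i) : ∃ s ∈ colonVars a i, a i s < a k s := by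
  obtain ⟨l, hl, s, ⟨k', hk', rfl⟩, hle⟩ :=
    genByVars_colon_iff.mp (hadm i) (a k - a i) ⟨a k, ⟨k, hk, rfl⟩, le_add_tsub⟩
  refine ⟨l, ⟨k', hk', hle⟩, ?_⟩
  rw [tsub_apply] at hl
  omega

end Admissible

theorem HS_one_hasLinearQuotients_general
    {K : Type*} [Field K] {n m : ℕ} (d : ℕ)
    (u : Fin m → MvPolynomial (Fin n) K)
    (hmon : ∀ i, IsMonomialElt (u i))
    (hdeg : ∀ i, (u i).totalDegree = d)
    (hadm : ∀ i : Fin m,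
      genByVars ((Ideal.span (u '' {j | j < i})).colon (Ideal.span {u i}))) :
    HasLinearQuotients (Ideal.span
      {w : MvPolynomial (Fin n) K | ∃ (i : Fin m) (j : Fin n),
        MvPolynomial.X j ∈ (Ideal.span (u '' {j' | j' < i})).colon (Ideal.span {u i}) ∧
        w = u i * MvPolynomial.X j}) := by
  choose a ha using hmon
  obtain rfl : u = fun i => monomial (a i) 1 := funext ha
  have hdeg' : ∀ i, (a i).degree = d := fun i => by
    simpa [degree_apply, Finsupp.sum] using hdeg i
  simp only [← Set.image_image (fun s => monomial s (1 : K)) a] at hadm ⊢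
  have hadm' := fun i k (hk : k < i) => exists_mem_colonVars_lt_of_genByVars hadm hk
  have hgens : {w : MvPolynomial (Fin n) K | ∃ i j,
      X j ∈ (Ideal.span ((fun s => monomial s (1 : K)) '' (a '' {k | k < i}))).colon
        (Ideal.span {monomial (a i) (1 : K)}) ∧ w = monomial (a i) 1 * X j} =
      (fun s => monomial s 1) ''
        ((fun p : Fin m ×ₗ Fin n => a (ofLex p).1 + single (ofLex p).2 1) ''
          {p | (ofLex p).2 ∈ colonVars a (ofLex p).1}) := by
    ext w
    simp only [X_mem_colon_iff_mem_colonVars]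
    simp [X, monomial_mul, eq_comm]
  rw [hgens]
  refine hasLinearQuotients_span_of_isLinearQuotientOrder (d := d + 1) (fun p _ => ?_)
    (isLinearQuotientOrder_firstShift hdeg' hadm')
  simp [hdeg']

/-- **Theorem 1.3 (Ficarra–Herzog).**  Let `I` be a monomial ideal generated in a single
degree `d` with linear quotients, and fix an admissible order `u 0, …, u (m-1)` of its
minimal monomial generators.  Then the first homological shift ideal
`HS_1(I) = (u_i · x_j : j ∈ set(u_i))` has linear quotients. -/
theorem HS_one_hasLinearQuotients
    {K : Type*} [Field K] {n m : ℕ} (d : ℕ)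
    (u : Fin m → MvPolynomial (Fin n) K)
    (hmon : ∀ i, IsMonomialElt (u i))
    (hdeg : ∀ i, (u i).totalDegree = d)
    (hmin : ∀ i j, i ≠ j → ¬ u i ∣ u j)
    (hadm : ∀ i : Fin m,
      genByVars ((Ideal.span (u '' {j | j < i})).colon (Ideal.span {u i}))) :
    HasLinearQuotients (Ideal.span
      {w : MvPolynomial (Fin n) K | ∃ (i : Fin m) (j : Fin n),
        MvPolynomial.X j ∈ (Ideal.span (u '' {j' | j' < i})).colon (Ideal.span {u i}) ∧
        w = u i * MvPolynomial.X j}) :=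
  HS_one_hasLinearQuotients_general d u hmon hdeg hadm
end

section
/- Let G be a finite simple graph on [n] = {1,…,n} with at least one edge, such that the ordering 1,2,…,n is a perfect elimination order of the complement G^c. Then listing the minimal monomial generators of the edge ideal I(G) in decreasing lexicographic order induced by x_1 > ⋯ > x_n yields an admissible order, and for every edge {i,j} ∈ E(G) with i < j, the set set(x_i x_j) = { k ∈ [n] : x_k ∈ (u ∈ G(I(G)) : u >_lex x_i x_j) : x_i x_j } equals {1,…,i−1} ∪ ({i+1,…,j−1} ∩ N_G(i)). -/
open MvPolynomial

/-- The natural ordering `1, 2, …, n` of the vertices is a perfect elimination order of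
`H`: for each vertex, its neighbourhood among the later vertices is a clique. -/
def natPEO {n : ℕ} (H : SimpleGraph (Fin n)) : Prop :=
  ∀ i j k : Fin n, i < j → i < k → j ≠ k → H.Adj i j → H.Adj i k → H.Adj j k

/-- The reversed ordering `n, n-1, …, 1` of the vertices is a perfect elimination order of
`H`: for each vertex, its neighbourhood among the earlier-labelled vertices is a clique. -/
def revPEO {n : ℕ} (H : SimpleGraph (Fin n)) : Prop :=
  ∀ i j k : Fin n, j < i → k < i → j ≠ k → H.Adj i j → H.Adj i k → H.Adj j k
/-- The set of minimal monomial generators of the edge ideal `I(G)` that are strictly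
greater than `x_i x_j` (where `i < j`) in the lexicographic order induced by
`x_1 > x_2 > ⋯ > x_n`:  these are the monomials `x_a x_b` with `{a,b} ∈ E(G)`, `a < b`,
and `a < i`, or `a = i` and `b < j`. -/
def lexEarlierEdgeGens (K : Type*) [Field K] {n : ℕ} (G : SimpleGraph (Fin n))
    (i j : Fin n) : Set (MvPolynomial (Fin n) K) :=
  {w | ∃ a b : Fin n, a < b ∧ G.Adj a b ∧ (a < i ∨ (a = i ∧ b < j)) ∧
    w = MvPolynomial.X a * MvPolynomial.X b}

/-! The colon of a monomial ideal by a monomial is computed on exponent vectors: `x^m` lies in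
`(x^e : e ∈ s) : x^d` iff some `e ∈ s` satisfies `e ≤ m + d`. For the lex-earlier edges
`x_a x_b` (`a < i`, or `a = i < b < j`) and `d = e_i + e_j`, a generator with `a < i` leaves
`x_a` dividing `x^m`, one with `a = i` leaves `x_b`. Conversely `x_k x_i x_j` is divisible by
`x_i x_k` when `i < k < j` is a neighbour of `i`, and for `k < i` by `x_k x_i` or `x_k x_j`:
if `k` were adjacent to neither in `G`, the perfect elimination property of `Gᶜ` at `k` would
make `i, j` adjacent in `Gᶜ`. -/

open Finsupp

namespace MvPolynomial

variable {σ R : Type*} [CommSemiring R]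

theorem support_mul_monomial_one (p : MvPolynomial σ R) (d : σ →₀ ℕ) :
    (p * monomial d 1).support = p.support.map (addRightEmbedding d) :=
  AddMonoidAlgebra.support_coeff_mul_single p 1 (by simp) d

theorem mem_span_monomial_image_colon_iff {s : Set (σ →₀ ℕ)} {d : σ →₀ ℕ}
    {f : MvPolynomial σ R} :
    f ∈ (Ideal.span ((fun e => monomial e (1 : R)) '' s)).colon
        (Ideal.span {monomial d (1 : R)}) ↔
      ∀ m ∈ f.support, ∃ e ∈ s, e ≤ m + d := by
  simp [mem_ideal_span_monomial_image, support_mul_monomial_one]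

theorem span_monomial_image_colon_eq_span_X_image {s : Set (σ →₀ ℕ)} {d : σ →₀ ℕ}
    {T : Set σ}
    (hT : ∀ k ∈ T, ∃ e ∈ s, e ≤ d + single k 1)
    (hs : ∀ e ∈ s, ∀ m, e ≤ m + d → ∃ k ∈ T, m k ≠ 0) :
    (Ideal.span ((fun e => monomial e (1 : R)) '' s)).colon (Ideal.span {monomial d (1 : R)}) =
      Ideal.span (X '' T) := by
  ext f
  rw [mem_span_monomial_image_colon_iff, mem_ideal_span_X_image]
  refine forall₂_congr fun m _ => ⟨fun ⟨e, he, hle⟩ => hs e he m hle, ?_⟩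
  rintro ⟨k, hk, hmk⟩
  obtain ⟨e, he, hle⟩ := hT k hk
  refine ⟨e, he, hle.trans ?_⟩
  rw [add_comm m]
  exact add_le_add_right (single_le_iff.2 (Nat.one_le_iff_ne_zero.2 hmk)) d

theorem X_mem_span_X_image_iff [Nontrivial R] {T : Set σ} {k : σ} :
    (X k : MvPolynomial σ R) ∈ Ideal.span (X '' T) ↔ k ∈ T := by
  simp [mem_ideal_span_X_image, support_X, single_apply_ne_zero]

end MvPolynomial

section EdgeIdeal

variable {n : ℕ} (G : SimpleGraph (Fin n)) (i j : Fin n)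

def lexEarlierEdgeExps : Set (Fin n →₀ ℕ) :=
  {d | ∃ a b : Fin n, a < b ∧ G.Adj a b ∧ (a < i ∨ (a = i ∧ b < j)) ∧
    d = single a 1 + single b 1}

/-- The paper's `set(x_i x_j)`. -/
def lexColonVars : Set (Fin n) :=
  {k | k < i} ∪ {k | i < k ∧ k < j ∧ G.Adj i k}

theorem lexEarlierEdgeGens_eq_image (K : Type*) [Field K] :
    lexEarlierEdgeGens K G i j = (fun d => monomial d (1 : K)) '' lexEarlierEdgeExps G i j := by
  ext w
  simp only [lexEarlierEdgeGens, lexEarlierEdgeExps, Set.mem_image]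
  constructor
  · rintro ⟨a, b, hab, hG, hlex, rfl⟩
    exact ⟨_, ⟨a, b, hab, hG, hlex, rfl⟩, by rw [X, X, monomial_mul, one_mul]⟩
  · rintro ⟨d, ⟨a, b, hab, hG, hlex, rfl⟩, rfl⟩
    exact ⟨a, b, hab, hG, hlex, by rw [X, X, monomial_mul, one_mul]⟩

variable {G i j}

theorem adj_or_adj_of_natPEO_compl (hPEO : natPEO Gᶜ) {k : Fin n} (hki : k < i) (hij : i < j)
    (hadj : G.Adj i j) : G.Adj k i ∨ G.Adj k j := by
  by_contra! h
  have hkj := hki.trans hij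
  exact (hPEO k i j hki hkj hij.ne ⟨hki.ne, h.1⟩ ⟨hkj.ne, h.2⟩).2 hadj

theorem exists_lexEarlierEdgeExps_le (hPEO : natPEO Gᶜ) (hij : i < j) (hadj : G.Adj i j)
    {k : Fin n} (hk : k ∈ lexColonVars G i j) :
    ∃ e ∈ lexEarlierEdgeExps G i j, e ≤ single i 1 + single j 1 + single k 1 := by
  rcases hk with hki | ⟨hik, hkj, hGik⟩
  · rcases adj_or_adj_of_natPEO_compl hPEO hki hij hadj with hGki | hGkj
    · exact ⟨_, ⟨k, i, hki, hGki, Or.inl hki, rfl⟩,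
        le_iff_exists_add.2 ⟨single j 1, by ac_rfl⟩⟩
    · exact ⟨_, ⟨k, j, hki.trans hij, hGkj, Or.inl hki, rfl⟩,
        le_iff_exists_add.2 ⟨single i 1, by ac_rfl⟩⟩
  · exact ⟨_, ⟨i, k, hik, hGik, Or.inr ⟨rfl, hkj⟩, rfl⟩,
      le_iff_exists_add.2 ⟨single j 1, by ac_rfl⟩⟩

theorem exists_mem_lexColonVars_of_le (hij : i < j) {e m : Fin n →₀ ℕ}
    (he : e ∈ lexEarlierEdgeExps G i j) (hle : e ≤ m + (single i 1 + single j 1)) :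
    ∃ k ∈ lexColonVars G i j, m k ≠ 0 := by
  obtain ⟨a, b, hab, hGab, hlex, rfl⟩ := he
  have hcoord : ∀ k, k ≠ i → k ≠ j → single a 1 k + single b 1 k ≤ m k :=
    fun k hki hkj => by simpa [single_apply, hki.symm, hkj.symm] using hle k
  rcases hlex with hai | ⟨rfl, hbj⟩
  · refine ⟨a, Or.inl hai, ?_⟩
    have := hcoord a hai.ne (hai.trans hij).ne
    rw [single_eq_same] at this
    omega
  · refine ⟨b, Or.inr ⟨hab, hbj, hGab⟩, ?_⟩
    have := hcoord b hab.ne' hbj.ne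
    rw [single_eq_same] at this
    omega

end EdgeIdeal

theorem edgeIdeal_lex_admissible_and_set_eq_general
    {K : Type*} [Field K] {n : ℕ} (G : SimpleGraph (Fin n))
    (hPEO : natPEO Gᶜ) :
    ∀ i j : Fin n, i < j → G.Adj i j →
      genByVars ((Ideal.span (lexEarlierEdgeGens K G i j)).colon
        (Ideal.span {MvPolynomial.X i * MvPolynomial.X j} : Ideal (MvPolynomial (Fin n) K))) ∧
      {k : Fin n | MvPolynomial.X k ∈ (Ideal.span (lexEarlierEdgeGens K G i j)).colon
          (Ideal.span {MvPolynomial.X i * MvPolynomial.X j} : Ideal (MvPolynomial (Fin n) K))} =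
        {k : Fin n | k < i} ∪ {k : Fin n | i < k ∧ k < j ∧ G.Adj i k} := by
  intro i j hij hadj
  have hcolon : (Ideal.span (lexEarlierEdgeGens K G i j)).colon
      (Ideal.span {X i * X j} : Ideal (MvPolynomial (Fin n) K)) =
        Ideal.span (X '' lexColonVars G i j) := by
    rw [lexEarlierEdgeGens_eq_image, X, X, monomial_mul, one_mul]
    exact span_monomial_image_colon_eq_span_X_image
      (fun k hk => exists_lexEarlierEdgeExps_le hPEO hij hadj hk)
      (fun e he m hle => exists_mem_lexColonVars_of_le hij he hle)
  refine ⟨⟨_, hcolon⟩, ?_⟩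
  ext k
  exact (congrArg (X k ∈ ·) hcolon).to_iff.trans X_mem_span_X_image_iff

/-- **Lemma 2.4 (Ficarra–Herzog), together with the linear quotients property.**
Let `G` be a graph on `Fin n` with at least one edge such that the natural order is a
perfect elimination order of `Gᶜ`.  Then listing the minimal monomial generators of
`I(G)` in decreasing lexicographic order (induced by `x_1 > ⋯ > x_n`) gives an admissible
order, and for every edge `{i,j}` with `i < j`,
`set(x_i x_j) = {1,…,i-1} ∪ ({i+1,…,j-1} ∩ N_G(i))`. -/
theorem edgeIdeal_lex_admissible_and_set_eq
    {K : Type*} [Field K] {n : ℕ} (G : SimpleGraph (Fin n))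
    (hedge : ∃ p q : Fin n, G.Adj p q)
    (hPEO : natPEO Gᶜ) :
    ∀ i j : Fin n, i < j → G.Adj i j →
      genByVars ((Ideal.span (lexEarlierEdgeGens K G i j)).colon
        (Ideal.span {MvPolynomial.X i * MvPolynomial.X j} : Ideal (MvPolynomial (Fin n) K))) ∧
      {k : Fin n | MvPolynomial.X k ∈ (Ideal.span (lexEarlierEdgeGens K G i j)).colon
          (Ideal.span {MvPolynomial.X i * MvPolynomial.X j} : Ideal (MvPolynomial (Fin n) K))} =
        {k : Fin n | k < i} ∪ {k : Fin n | i < k ∧ k < j ∧ G.Adj i k} :=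
  edgeIdeal_lex_admissible_and_set_eq_general G hPEO
end

section
/- Let G be a finite simple graph on [n] = {1,…,n} such that 1,2,…,n is a perfect elimination order of G^c, and compute set(x_i x_j) = { k ∈ [n] : x_k ∈ (u ∈ G(I(G)) : u >_lex x_i x_j) : x_i x_j } with respect to the decreasing lexicographic order induced by x_1 > ⋯ > x_n. Then for every k ≥ 0, the monomial ideal generated by all products x_i x_j · x_A with {i,j} ∈ E(G), i < j, A ⊆ set(x_i x_j), |A| = k, equals the monomial ideal generated by all x_A x_B where A and B are nonempty subsets of [n] with max A < min B, |A ∪ B| = k + 2, and {max A, b} ∈ E(G) for all b ∈ B. -/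
/-!
Computing the colon ideal on monomials, `set(x_i x_j)` consists of the `k < i` adjacent to `i`
or to `j` and the `i < k < j` adjacent to `i`. So `x_i x_j x_A = x_{A'} x_{B'}`, where `A'` is
the part of `{i, j} ∪ A` up to `i` and `B'` the rest, every element of `B'` being adjacent to
`i = max A'`. Conversely, `x_A x_B = x_i x_j x_C` with `i = max A`, `j = max B`: the elements of
`B` lie in `set(x_i x_j)`, and so do those of `A`, since an `a < i` adjacent to neither `i` nor
`j` in `G` would, by the perfect elimination order of `Gᶜ`, make `i` and `j` adjacent in `Gᶜ`.
-/

open MvPolynomial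

/-- The generating monomials of the `k`-th homological shift ideal `HS_k(I(G))`:
all monomials `x_A x_B` with `A, B` nonempty, `max A < min B`, `|A ∪ B| = k + 2` and
`{max A, b} ∈ E(G)` for all `b ∈ B`. -/
def HSgens (K : Type*) [Field K] {n : ℕ} (G : SimpleGraph (Fin n)) (k : ℕ) :
    Set (MvPolynomial (Fin n) K) :=
  {w | ∃ A B : Finset (Fin n), A.Nonempty ∧ B.Nonempty ∧
    (∀ a ∈ A, ∀ b ∈ B, a < b) ∧ (A ∪ B).card = k + 2 ∧
    (∃ a0 ∈ A, (∀ a ∈ A, a ≤ a0) ∧ ∀ b ∈ B, G.Adj a0 b) ∧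
    w = (∏ i ∈ A, MvPolynomial.X i) * ∏ i ∈ B, MvPolynomial.X i}

lemma Finsupp.eq_or_eq_or_eq_of_mem_support_single_add_single_add_single {σ : Type*}
    {k i j c : σ}
    (h : c ∈ (Finsupp.single k 1 + Finsupp.single i 1 + Finsupp.single j 1 : σ →₀ ℕ).support) :
    c = k ∨ c = i ∨ c = j := by
  by_contra! hc
  simp [Finsupp.single_eq_of_ne hc.1, Finsupp.single_eq_of_ne hc.2.1,
    Finsupp.single_eq_of_ne hc.2.2] at h

namespace natPEO

variable {n : ℕ} {G : SimpleGraph (Fin n)}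

lemma adj_or_adj_of_adj (hPEO : natPEO Gᶜ) {a b c : Fin n} (hab : a < b) (hbc : b < c)
    (hadj : G.Adj b c) : G.Adj a b ∨ G.Adj a c := by
  by_contra! h
  exact (hPEO a b c hab (hab.trans hbc) hbc.ne ⟨hab.ne, h.1⟩ ⟨(hab.trans hbc).ne, h.2⟩).2 hadj

end natPEO

section EdgeIdeal

variable {K : Type*} [Field K] {n : ℕ} (G : SimpleGraph (Fin n))

/-- The paper's `set(x_i x_j)`, in the closed form of `X_mem_colon_lexEarlierEdgeGens_iff`. -/
def lexColonSet (i j : Fin n) : Set (Fin n) :=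
  {k | (k < i ∧ (G.Adj k i ∨ G.Adj k j)) ∨ (i < k ∧ k < j ∧ G.Adj i k)}

lemma X_mul_X_eq_monomial (a b : Fin n) :
    (X a * X b : MvPolynomial (Fin n) K) =
      monomial (Finsupp.single a 1 + Finsupp.single b 1) 1 := by
  rw [X, X, monomial_mul, one_mul]

lemma lexEarlierEdgeGens_eq_image_s4 (i j : Fin n) :
    lexEarlierEdgeGens K G i j = (fun s => monomial s (1 : K)) ''
      {s | ∃ a b : Fin n, a < b ∧ G.Adj a b ∧ (a < i ∨ (a = i ∧ b < j)) ∧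
        s = Finsupp.single a 1 + Finsupp.single b 1} := by
  ext w
  constructor
  · rintro ⟨a, b, hab, hadj, hlex, rfl⟩
    exact ⟨_, ⟨a, b, hab, hadj, hlex, rfl⟩, (X_mul_X_eq_monomial a b).symm⟩
  · rintro ⟨_, ⟨a, b, hab, hadj, hlex, rfl⟩, rfl⟩
    exact ⟨a, b, hab, hadj, hlex, (X_mul_X_eq_monomial a b).symm⟩

lemma X_mul_X_mem_span_lexEarlierEdgeGens {i j a b : Fin n} (hab : a < b) (hadj : G.Adj a b)
    (hlex : a < i ∨ (a = i ∧ b < j)) :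
    X a * X b ∈ Ideal.span (lexEarlierEdgeGens K G i j) :=
  Ideal.subset_span ⟨a, b, hab, hadj, hlex, rfl⟩

theorem X_mem_colon_lexEarlierEdgeGens_iff {i j : Fin n} (hij : i < j) (k : Fin n) :
    X k ∈ (Ideal.span (lexEarlierEdgeGens K G i j)).colon
        ((Ideal.span {X i * X j} : Ideal (MvPolynomial (Fin n) K)) :
          Set (MvPolynomial (Fin n) K)) ↔ k ∈ lexColonSet G i j := by
  rw [Ideal.mem_colon_span_singleton]
  constructor
  · intro h
    rw [lexEarlierEdgeGens_eq_image_s4, mem_ideal_span_monomial_image, ← mul_assoc,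
      X_mul_X_eq_monomial, X, monomial_mul, one_mul] at h
    obtain ⟨_, ⟨a, b, hab, hadj, hlex, rfl⟩, hle⟩ := h
      (Finsupp.single k 1 + Finsupp.single i 1 + Finsupp.single j 1) (by simp [mem_support_iff])
    -- a monomial `x_a x_b` dividing `x_k x_i x_j` has `a, b ∈ {k, i, j}`
    have ha := Finsupp.eq_or_eq_or_eq_of_mem_support_single_add_single_add_single
      (Finsupp.support_mono hle (show a ∈ _ by simp))
    have hb := Finsupp.eq_or_eq_or_eq_of_mem_support_single_add_single_add_single
      (Finsupp.support_mono hle (show b ∈ _ by simp))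
    rcases ha with rfl | rfl | rfl <;> rcases hb with rfl | rfl | rfl <;> grind [lexColonSet]
  · rintro (⟨hki, hadj | hadj⟩ | ⟨hik, hkj, hadj⟩)
    · exact Ideal.mem_of_dvd _ (Dvd.intro (X j) (by ring))
        (X_mul_X_mem_span_lexEarlierEdgeGens G hki hadj (.inl hki))
    · exact Ideal.mem_of_dvd _ (Dvd.intro (X i) (by ring))
        (X_mul_X_mem_span_lexEarlierEdgeGens G (hki.trans hij) hadj (.inl hki))
    · exact Ideal.mem_of_dvd _ (Dvd.intro (X j) (by ring))
        (X_mul_X_mem_span_lexEarlierEdgeGens G hik hadj (.inr ⟨rfl, hkj⟩))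

/-- The witnesses are the parts of `{i, j} ∪ A` up to `i` and above `i`. -/
lemma X_mul_X_mul_prod_mem_HSgens {i j : Fin n} (hij : i < j) (hadj : G.Adj i j)
    {A : Finset (Fin n)} (hA : ∀ a ∈ A, a ∈ lexColonSet G i j) :
    X i * X j * ∏ a ∈ A, X a ∈ HSgens K G A.card := by
  have hiA : i ∉ A := fun hi => by
    rcases hA i hi with ⟨h, _⟩ | ⟨h, _⟩ <;> exact lt_irrefl i h
  have hjA : j ∉ insert i A := by
    rw [Finset.mem_insert]
    rintro (h | hj)
    · exact hij.ne' h
    · rcases hA j hj with ⟨h, _⟩ | ⟨_, h, _⟩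
      · exact lt_asymm h hij
      · exact lt_irrefl j h
  set S := insert j (insert i A)
  refine ⟨S.filter (· ≤ i), S.filter (¬ · ≤ i), ⟨i, by simp [S]⟩, ⟨j, by simp [S, hij]⟩,
    ?_, ?_, ⟨i, by simp [S], by simp, ?_⟩, ?_⟩
  · intro a ha b hb
    rw [Finset.mem_filter] at ha hb
    exact ha.2.trans_lt (not_le.1 hb.2)
  · rw [Finset.filter_union_filter_not_eq, Finset.card_insert_of_notMem hjA,
      Finset.card_insert_of_notMem hiA]
  · intro b hb
    simp only [S, Finset.mem_filter, Finset.mem_insert, not_le] at hb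
    obtain ⟨rfl | rfl | hbA, hib⟩ := hb
    · exact hadj
    · exact absurd hib (lt_irrefl b)
    · rcases hA b hbA with ⟨h, _⟩ | ⟨_, _, h⟩
      · exact absurd (h.trans hib) (lt_irrefl b)
      · exact h
  · rw [← Finset.prod_union (Finset.disjoint_filter_filter_not _ _ _),
      Finset.filter_union_filter_not_eq, Finset.prod_insert hjA, Finset.prod_insert hiA]
    ring

/-- The witnesses are `i = max A`, `j = max B` and `C = (A ∪ B) \ {i, j}`. -/
lemma exists_edge_of_mem_HSgens (hPEO : natPEO Gᶜ) {k : ℕ} {w : MvPolynomial (Fin n) K}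
    (hw : w ∈ HSgens K G k) :
    ∃ i j : Fin n, i < j ∧ G.Adj i j ∧ ∃ C : Finset (Fin n), C.card = k ∧
      (∀ c ∈ C, c ∈ lexColonSet G i j) ∧ w = X i * X j * ∏ c ∈ C, X c := by
  obtain ⟨A, B, -, hB, hlt, hcard, ⟨i, hiA, himax, hiadj⟩, rfl⟩ := hw
  set j := B.max' hB
  have hjB : j ∈ B := B.max'_mem hB
  have hij : i < j := hlt i hiA j hjB
  have hiU : i ∈ A ∪ B := Finset.mem_union_left _ hiA
  have hjU : j ∈ (A ∪ B).erase i := Finset.mem_erase.2 ⟨hij.ne', Finset.mem_union_right _ hjB⟩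
  refine ⟨i, j, hij, hiadj j hjB, ((A ∪ B).erase i).erase j, ?_, ?_, ?_⟩
  · rw [Finset.card_erase_of_mem hjU, Finset.card_erase_of_mem hiU, hcard]
    rfl
  · intro c hc
    simp only [Finset.mem_erase, Finset.mem_union] at hc
    obtain ⟨hcj, hci, hcA | hcB⟩ := hc
    · have hci' : c < i := lt_of_le_of_ne (himax c hcA) hci
      exact .inl ⟨hci', hPEO.adj_or_adj_of_adj hci' hij (hiadj j hjB)⟩
    · exact .inr ⟨hlt i hiA c hcB, lt_of_le_of_ne (B.le_max' c hcB) hcj, hiadj c hcB⟩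
  · have hAB : Disjoint A B :=
      Finset.disjoint_left.2 fun a haA haB => lt_irrefl a (hlt a haA a haB)
    rw [mul_assoc, Finset.mul_prod_erase _ _ hjU, Finset.mul_prod_erase _ _ hiU,
      Finset.prod_union hAB]

end EdgeIdeal

/-- **Lemma 2.4 (Ficarra–Herzog), description of `HS_k(I(G))`.**  Let `G` be a graph on
`Fin n` such that the natural order is a perfect elimination order of `Gᶜ`, and for an
edge `{i,j}` with `i < j` let
`set(x_i x_j) = { k : x_k ∈ (u ∈ G(I(G)) : u >_lex x_i x_j) : x_i x_j }`.  Then for every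
`k ≥ 0`, the ideal generated by the monomials `x_i x_j · x_A` with `{i,j} ∈ E(G)`,
`i < j`, `A ⊆ set(x_i x_j)`, `|A| = k`, coincides with the ideal generated by the
monomials `x_A x_B` with `A, B` nonempty, `max A < min B`, `|A ∪ B| = k + 2` and
`{max A, b} ∈ E(G)` for all `b ∈ B`. -/
theorem HS_k_edgeIdeal_description
    {K : Type*} [Field K] {n : ℕ} (G : SimpleGraph (Fin n))
    (hPEO : natPEO Gᶜ) (k : ℕ) :
    Ideal.span {w : MvPolynomial (Fin n) K | ∃ i j : Fin n, i < j ∧ G.Adj i j ∧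
      ∃ A : Finset (Fin n), A.card = k ∧
        (∀ a ∈ A, MvPolynomial.X a ∈ (Ideal.span (lexEarlierEdgeGens K G i j)).colon
          ((Ideal.span {MvPolynomial.X i * MvPolynomial.X j} : Ideal (MvPolynomial (Fin n) K)) :
            Set (MvPolynomial (Fin n) K))) ∧
        w = MvPolynomial.X i * MvPolynomial.X j * ∏ a ∈ A, MvPolynomial.X a} =
    Ideal.span (HSgens K G k) := by
  apply le_antisymm <;> rw [Ideal.span_le]
  · rintro _ ⟨i, j, hij, hadj, A, rfl, hA, rfl⟩
    exact Ideal.subset_span <| X_mul_X_mul_prod_mem_HSgens G hij hadj fun a ha =>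
      (X_mem_colon_lexEarlierEdgeGens_iff G hij a).1 (hA a ha)
  · intro w hw
    obtain ⟨i, j, hij, hadj, C, hC, hCset, rfl⟩ := exists_edge_of_mem_HSgens G hPEO hw
    exact Ideal.subset_span ⟨i, j, hij, hadj, C, hC, fun c hc =>
      (X_mem_colon_lexEarlierEdgeGens_iff G hij c).2 (hCset c hc), rfl⟩
end

section
/- Let n, m ≥ 1 and let G = K_{n,m} be the complete bipartite graph on [n+m] with parts [n] and {n+1,…,n+m}, so that I(G) = (x_1,…,x_n)(x_{n+1},…,x_{n+m}) ⊆ K[x_1,…,x_{n+m}]. Then the ordering 1,2,…,n+m is a perfect elimination order of G^c and, for every k ≥ 0, the k-th homological shift ideal HS_k(I(G)) equals the monomial ideal generated by all squarefree monomials of degree k+2 in x_1,…,x_{n+m} that are divisible by x_i x_j for some i ∈ [n] and some j ∈ {n+1,…,n+m}; moreover HS_k(I(G)) has linear quotients with respect to the lexicographic order induced by any ordering of the variables. -/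
/-!
In `K_{n,m}` the vertex `max A` is adjacent to every vertex of `B` exactly when `A` lies in
the left part and `B` in the right part, so the supports of the generators of `HS_k` are the
`(k+2)`-sets meeting both parts. The colon ideal of a squarefree monomial ideal by `x_C` is
generated by variables as soon as every earlier support `D` admits an exchange: some
`t ∈ D \ C` and an earlier support inside `C ∪ {t}`. For lex-earlier `D`, take `t` the first
variable where `D` and `C` differ and trade it for a later element `s ∈ C \ D`, chosen so that
`(C ∪ {t}) \ {s}` still meets both parts; a counting argument shows that such `s` exists.
-/

open MvPolynomial

/-- The supports of the generating monomials of `HS_k(I(G))`: sets `C = A ∪ B` with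
`A, B` nonempty, `max A < min B`, `|C| = k + 2` and `{max A, b} ∈ E(G)` for all `b ∈ B`;
the corresponding generator of `HS_k(I(G))` is the squarefree monomial `x_C = x_A x_B`. -/
def HSsets {n : ℕ} (G : SimpleGraph (Fin n)) (k : ℕ) : Set (Finset (Fin n)) :=
  {C | ∃ A B : Finset (Fin n), A.Nonempty ∧ B.Nonempty ∧
    (∀ a ∈ A, ∀ b ∈ B, a < b) ∧ A ∪ B = C ∧ C.card = k + 2 ∧
    ∃ a0 ∈ A, (∀ a ∈ A, a ≤ a0) ∧ ∀ b ∈ B, G.Adj a0 b}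
/-- For squarefree monomials `x_C`, `x_D` of the same degree, `x_C >_lex x_D` in the
lexicographic order induced by the ordering `x_{σ 0} > x_{σ 1} > ⋯ > x_{σ (n-1)}` of the
variables iff at the first variable (in this ordering) where the supports differ, that
variable lies in `C`. -/
def lexGtPerm {n : ℕ} (σ : Equiv.Perm (Fin n)) (C D : Finset (Fin n)) : Prop :=
  ∃ a : Fin n, a ∈ C ∧ a ∉ D ∧ ∀ b : Fin n, σ.symm b < σ.symm a → (b ∈ C ↔ b ∈ D)
/-- The complete bipartite graph `K_{n,m}` on `Fin (n+m)`, with parts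
`{0,…,n-1}` (corresponding to `[n] = {1,…,n}`) and `{n,…,n+m-1}` (corresponding to
`{n+1,…,n+m}`). -/
def bipartiteGraph (n m : ℕ) : SimpleGraph (Fin (n + m)) where
  Adj i j := ((i : ℕ) < n ∧ n ≤ (j : ℕ)) ∨ ((j : ℕ) < n ∧ n ≤ (i : ℕ))
  symm := ⟨fun i j h => h.symm⟩
  loopless := ⟨fun i h => by rcases h with ⟨h1, h2⟩ | ⟨h1, h2⟩ <;> omega⟩

open Finset

theorem Finset.prod_insert_dvd_mul {α M : Type*} [DecidableEq α] [CommMonoid M] (f : α → M)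
    (t : α) (C : Finset α) : ∏ i ∈ insert t C, f i ∣ f t * ∏ i ∈ C, f i := by
  by_cases ht : t ∈ C
  · rw [insert_eq_of_mem ht]
    exact dvd_mul_left _ _
  · rw [prod_insert ht]

theorem Finset.exists_mem_sdiff_exists_ne_not_of_card_eq {α : Type*} [DecidableEq α]
    {q : α → Prop} {C D : Finset α} {a : α} (hcard : #C = #D) (haD : a ∈ D) (haC : a ∉ C)
    (hqa : q a) (hC : ∃ j ∈ C, ¬q j) (hD : ∃ j ∈ D, ¬q j) :
    ∃ s ∈ C \ D, ∃ j ∈ C, j ≠ s ∧ ¬q j := by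
  by_contra! H
  obtain ⟨j, hjC, hj⟩ := hC
  obtain ⟨d, hdD, hd⟩ := hD
  have hsdiff : #(C \ D) = #(D \ C) := card_sdiff_comm hcard
  have hCD_sub : C \ D ⊆ {j} := fun s hs =>
    mem_singleton.2 (by_contra fun hsj => hj (H s hs j hjC (Ne.symm hsj)))
  have hdC : d ∉ C := by
    intro hdC
    obtain ⟨s, hs⟩ : (C \ D).Nonempty := by
      rw [← card_pos, hsdiff]
      exact card_pos.2 ⟨a, mem_sdiff.2 ⟨haD, haC⟩⟩
    exact hd (H s hs d hdC (fun hds => (mem_sdiff.1 hs).2 (hds ▸ hdD)))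
  have hpair : {a, d} ⊆ D \ C := by
    simp [insert_subset_iff, haD, haC, hdD, hdC]
  have had : a ≠ d := fun h => hd (h ▸ hqa)
  have hDC_card : 2 ≤ #(D \ C) := card_pair had ▸ card_le_card hpair
  have hCD_card : #(C \ D) ≤ 1 := card_singleton j ▸ card_le_card hCD_sub
  omega

namespace MvPolynomial

variable {σ R : Type*} [CommSemiring R]

noncomputable def squarefreeExponent (C : Finset σ) : σ →₀ ℕ := ∑ i ∈ C, Finsupp.single i 1

theorem squarefreeExponent_apply [DecidableEq σ] (C : Finset σ) (j : σ) :
    squarefreeExponent C j = if j ∈ C then 1 else 0 := by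
  simp only [squarefreeExponent, Finsupp.finsetSum_apply, Finsupp.single_apply]
  exact sum_ite_eq' C j fun _ => 1

@[simp]
theorem support_squarefreeExponent (C : Finset σ) : (squarefreeExponent C).support = C := by
  classical
  ext j
  simp [squarefreeExponent_apply]

theorem squarefreeExponent_le_iff {D : Finset σ} {μ : σ →₀ ℕ} :
    squarefreeExponent D ≤ μ ↔ D ⊆ μ.support := by
  classical
  simp only [Finsupp.le_def, squarefreeExponent_apply, subset_iff, Finsupp.mem_support_iff]
  refine ⟨fun h j hj => ?_, fun h j => ?_⟩
  · simpa [hj, Nat.one_le_iff_ne_zero] using h j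
  · split_ifs with hj
    · exact Nat.one_le_iff_ne_zero.2 (h hj)
    · exact Nat.zero_le _

theorem prod_X_eq_monomial_squarefreeExponent (C : Finset σ) :
    ∏ i ∈ C, (X i : MvPolynomial σ R) = monomial (squarefreeExponent C) 1 :=
  (monomial_sum_one C _).symm

theorem mem_span_prod_X_image_iff {S : Set (Finset σ)} {f : MvPolynomial σ R} :
    f ∈ Ideal.span ((fun D => ∏ i ∈ D, X i) '' S) ↔
      ∀ μ ∈ f.support, ∃ D ∈ S, D ⊆ μ.support := by
  have hgens : (fun D => ∏ i ∈ D, (X i : MvPolynomial σ R)) '' S =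
      (fun s => monomial s 1) '' (squarefreeExponent '' S) := by
    rw [Set.image_image]
    simp only [prod_X_eq_monomial_squarefreeExponent]
  simp only [hgens, mem_ideal_span_monomial_image, Set.exists_mem_image,
    squarefreeExponent_le_iff]

theorem colon_span_prod_X_eq_span_X [DecidableEq σ] {S : Set (Finset σ)} {C : Finset σ}
    (hS : ∀ D ∈ S, ∃ t ∈ D, t ∉ C ∧ ∃ D' ∈ S, D' ⊆ insert t C) :
    (Ideal.span ((fun D => ∏ i ∈ D, X i) '' S)).colon
        ((Ideal.span {∏ i ∈ C, X i} : Ideal (MvPolynomial σ R)) : Set (MvPolynomial σ R)) =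
      Ideal.span (X '' {t | ∃ D ∈ S, D ⊆ insert t C}) := by
  apply le_antisymm
  · intro f hf
    rw [Ideal.mem_colon_span_singleton, mem_span_prod_X_image_iff] at hf
    rw [mem_ideal_span_X_image]
    intro μ hμ
    have hshift : μ + squarefreeExponent C ∈ (f * ∏ i ∈ C, X i).support := by
      rw [prod_X_eq_monomial_squarefreeExponent, mem_support_iff, coeff_mul_monomial, mul_one]
      exact mem_support_iff.mp hμ
    obtain ⟨D, hDS, hD⟩ := hf _ hshift
    obtain ⟨t, htD, htC, hexchange⟩ := hS D hDS
    rw [Finsupp.support_add_eq_union, support_squarefreeExponent] at hD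
    refine ⟨t, hexchange, ?_⟩
    simpa [htC] using hD htD
  · rw [Ideal.span_le]
    rintro _ ⟨t, ⟨D, hDS, hD⟩, rfl⟩
    rw [SetLike.mem_coe, Ideal.mem_colon_span_singleton]
    exact Ideal.mem_of_dvd _
      ((prod_dvd_prod_of_subset _ _ _ hD).trans (prod_insert_dvd_mul _ t C))
      (Ideal.subset_span (Set.mem_image_of_mem _ hDS))

end MvPolynomial

theorem lexGtPerm_erase_insert {N : ℕ} {σ : Equiv.Perm (Fin N)} {C : Finset (Fin N)}
    {a s : Fin N} (haC : a ∉ C) (has : σ.symm a < σ.symm s) :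
    lexGtPerm σ ((insert a C).erase s) C := by
  refine ⟨a, mem_erase.2 ⟨fun h => has.ne (congrArg σ.symm h), mem_insert_self a C⟩, haC,
    fun b hb => ?_⟩
  have hba : b ≠ a := fun h => hb.ne (congrArg σ.symm h)
  have hbs : b ≠ s := fun h => hb.not_gt (h ▸ has)
  simp [hba, hbs]

theorem HSgens_eq_image_HSsets (K : Type*) [Field K] {N : ℕ} (G : SimpleGraph (Fin N))
    (k : ℕ) : HSgens K G k = (fun C => ∏ i ∈ C, (X i : MvPolynomial (Fin N) K)) '' HSsets G k := by
  ext w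
  constructor
  · rintro ⟨A, B, hA, hB, hlt, hcard, hmax, rfl⟩
    have hAB : Disjoint A B := disjoint_left.2 fun a haA haB => (hlt a haA a haB).false
    exact ⟨A ∪ B, ⟨A, B, hA, hB, hlt, rfl, hcard, hmax⟩, prod_union hAB⟩
  · rintro ⟨C, ⟨A, B, hA, hB, hlt, rfl, hcard, hmax⟩, rfl⟩
    have hAB : Disjoint A B := disjoint_left.2 fun a haA haB => (hlt a haA a haB).false
    exact ⟨A, B, hA, hB, hlt, hcard, hmax, prod_union hAB⟩

theorem natPEO_compl_bipartiteGraph (n m : ℕ) : natPEO (bipartiteGraph n m)ᶜ := by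
  intro i j k _ _ hjk hij hik
  simp only [SimpleGraph.compl_adj, bipartiteGraph] at hij hik ⊢
  omega

theorem mem_HSsets_bipartiteGraph {n m k : ℕ} {C : Finset (Fin (n + m))} :
    C ∈ HSsets (bipartiteGraph n m) k ↔
      #C = k + 2 ∧ (∃ i ∈ C, (i : ℕ) < n) ∧ ∃ j ∈ C, n ≤ (j : ℕ) := by
  constructor
  · rintro ⟨A, B, -, ⟨b, hb⟩, hlt, rfl, hcard, a, haA, -, hadj⟩
    have hab : a < b := hlt a haA b hb
    have hadjb : ((a : ℕ) < n ∧ n ≤ (b : ℕ)) ∨ ((b : ℕ) < n ∧ n ≤ (a : ℕ)) := hadj b hb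
    exact ⟨hcard, ⟨a, mem_union_left _ haA, by omega⟩, ⟨b, mem_union_right _ hb, by omega⟩⟩
  · rintro ⟨hcard, ⟨i, hiC, hi⟩, ⟨j, hjC, hj⟩⟩
    set A := C.filter fun x : Fin (n + m) => (x : ℕ) < n
    set B := C.filter fun x : Fin (n + m) => n ≤ (x : ℕ)
    have hA : A.Nonempty := ⟨i, mem_filter.2 ⟨hiC, hi⟩⟩
    have hmaxA : ((A.max' hA : Fin (n + m)) : ℕ) < n := (mem_filter.1 (A.max'_mem hA)).2
    refine ⟨A, B, hA, ⟨j, mem_filter.2 ⟨hjC, hj⟩⟩, fun a ha b hb => ?_, ?_, hcard,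
      A.max' hA, A.max'_mem hA, A.le_max', fun b hb => Or.inl ⟨hmaxA, (mem_filter.1 hb).2⟩⟩
    · exact Fin.lt_def.2 ((mem_filter.1 ha).2.trans_le (mem_filter.1 hb).2)
    · rw [← filter_or]
      exact filter_true_of_mem fun x _ => lt_or_ge _ _

theorem exists_exchange_bipartiteGraph {n m k : ℕ} {σ : Equiv.Perm (Fin (n + m))}
    {C D : Finset (Fin (n + m))} (hC : C ∈ HSsets (bipartiteGraph n m) k)
    (hD : D ∈ HSsets (bipartiteGraph n m) k) (hDC : lexGtPerm σ D C) :
    ∃ t ∈ D, t ∉ C ∧ ∃ D' ∈ {D' | D' ∈ HSsets (bipartiteGraph n m) k ∧ lexGtPerm σ D' C},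
      D' ⊆ insert t C := by
  rw [mem_HSsets_bipartiteGraph] at hC hD
  obtain ⟨a, haD, haC, hagree⟩ := hDC
  have hcard : #C = #D := hC.1.trans hD.1.symm
  suffices ∃ s ∈ C \ D, (∃ i ∈ (insert a C).erase s, (i : ℕ) < n) ∧
      ∃ j ∈ (insert a C).erase s, n ≤ (j : ℕ) by
    obtain ⟨s, hs, hleft, hright⟩ := this
    obtain ⟨hsC, hsD⟩ := mem_sdiff.1 hs
    have has : σ.symm a < σ.symm s := by
      rcases lt_trichotomy (σ.symm s) (σ.symm a) with h | h | h
      · exact absurd ((hagree s h).2 hsC) hsD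
      · exact absurd (σ.symm.injective h ▸ hsC) haC
      · exact h
    refine ⟨a, haD, haC, (insert a C).erase s, ⟨?_, lexGtPerm_erase_insert haC has⟩,
      erase_subset _ _⟩
    rw [mem_HSsets_bipartiteGraph, card_erase_of_mem (mem_insert_of_mem hsC),
      card_insert_of_notMem haC, hC.1]
    exact ⟨rfl, hleft, hright⟩
  have ha_mem : ∀ s ∈ C \ D, a ∈ (insert a C).erase s := fun s hs =>
    mem_erase.2 ⟨fun h => haC (h ▸ (mem_sdiff.1 hs).1), mem_insert_self a C⟩
  have hC_mem : ∀ s j, j ∈ C → j ≠ s → j ∈ (insert a C).erase s := fun s j hjC hjs =>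
    mem_erase.2 ⟨hjs, mem_insert_of_mem hjC⟩
  rcases lt_or_ge (a : ℕ) n with ha | ha
  · obtain ⟨s, hs, j, hjC, hjs, hj⟩ := exists_mem_sdiff_exists_ne_not_of_card_eq
      (q := fun x : Fin (n + m) => (x : ℕ) < n) hcard haD haC ha
      (by simpa only [not_lt] using hC.2.2) (by simpa only [not_lt] using hD.2.2)
    exact ⟨s, hs, ⟨a, ha_mem s hs, ha⟩, ⟨j, hC_mem s j hjC hjs, not_lt.1 hj⟩⟩
  · obtain ⟨s, hs, i, hiC, his, hi⟩ := exists_mem_sdiff_exists_ne_not_of_card_eq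
      (q := fun x : Fin (n + m) => n ≤ (x : ℕ)) hcard haD haC ha
      (by simpa only [not_le] using hC.2.1) (by simpa only [not_le] using hD.2.1)
    exact ⟨s, hs, ⟨i, hC_mem s i hiC his, not_le.1 hi⟩, ⟨a, ha_mem s hs, ha⟩⟩

theorem HS_k_complete_bipartite_general
    {K : Type*} [Field K] (n m : ℕ) :
    natPEO (bipartiteGraph n m)ᶜ ∧
    (∀ k : ℕ, Ideal.span (HSgens K (bipartiteGraph n m) k) =
      Ideal.span {w : MvPolynomial (Fin (n + m)) K | ∃ C : Finset (Fin (n + m)),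
        C.card = k + 2 ∧ (∃ i ∈ C, (i : ℕ) < n) ∧ (∃ j ∈ C, n ≤ (j : ℕ)) ∧
        w = ∏ i ∈ C, MvPolynomial.X i}) ∧
    ∀ k : ℕ, ∀ σ : Equiv.Perm (Fin (n + m)), ∀ C ∈ HSsets (bipartiteGraph n m) k,
      genByVars ((Ideal.span
          ((fun D : Finset (Fin (n + m)) =>
            ∏ i ∈ D, (MvPolynomial.X i : MvPolynomial (Fin (n + m)) K)) ''
            {D | D ∈ HSsets (bipartiteGraph n m) k ∧ lexGtPerm σ D C})).colon
        ((Ideal.span {∏ i ∈ C, MvPolynomial.X i} : Ideal (MvPolynomial (Fin (n + m)) K)) :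
          Set (MvPolynomial (Fin (n + m)) K))) := by
  refine ⟨natPEO_compl_bipartiteGraph n m, fun k => ?_, fun k σ C hC =>
    ⟨_, colon_span_prod_X_eq_span_X fun D hD => exists_exchange_bipartiteGraph hC hD.1 hD.2⟩⟩
  rw [HSgens_eq_image_HSsets]
  congr 1
  ext w
  simp only [Set.mem_image, Set.mem_ofPred_eq, mem_HSsets_bipartiteGraph, and_assoc, eq_comm]

/-- **Example 2.8(a) (Ficarra–Herzog).**  Let `G = K_{n,m}` be the complete bipartite
graph with parts `[n]` and `{n+1,…,n+m}` (`n, m ≥ 1`).  Then the natural order is a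
perfect elimination order of `Gᶜ`; for every `k ≥ 0`, `HS_k(I(G))` is generated by all
squarefree monomials of degree `k+2` divisible by `x_i x_j` for some `i ∈ [n]` and
`j ∈ {n+1,…,n+m}`; and `HS_k(I(G))` has linear quotients with respect to the
lexicographic order induced by any ordering of the variables. -/
theorem HS_k_complete_bipartite
    {K : Type*} [Field K] (n m : ℕ) (hn : 1 ≤ n) (hm : 1 ≤ m) :
    natPEO (bipartiteGraph n m)ᶜ ∧
    (∀ k : ℕ, Ideal.span (HSgens K (bipartiteGraph n m) k) =
      Ideal.span {w : MvPolynomial (Fin (n + m)) K | ∃ C : Finset (Fin (n + m)),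
        C.card = k + 2 ∧ (∃ i ∈ C, (i : ℕ) < n) ∧ (∃ j ∈ C, n ≤ (j : ℕ)) ∧
        w = ∏ i ∈ C, MvPolynomial.X i}) ∧
    ∀ k : ℕ, ∀ σ : Equiv.Perm (Fin (n + m)), ∀ C ∈ HSsets (bipartiteGraph n m) k,
      genByVars ((Ideal.span
          ((fun D : Finset (Fin (n + m)) =>
            ∏ i ∈ D, (MvPolynomial.X i : MvPolynomial (Fin (n + m)) K)) ''
            {D | D ∈ HSsets (bipartiteGraph n m) k ∧ lexGtPerm σ D C})).colon
        ((Ideal.span {∏ i ∈ C, MvPolynomial.X i} : Ideal (MvPolynomial (Fin (n + m)) K)) :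
          Set (MvPolynomial (Fin (n + m)) K))) :=
  HS_k_complete_bipartite_general n m
end

section
/- Let G be a finite simple graph on [n] = {1,…,n} such that the complement G^c is a forest, the vertex set of each connected component of G^c is a set of consecutive integers, and 1,2,…,n is a perfect elimination order of G^c. Then for every k ≥ 0 the k-th homological shift ideal HS_k(I(G)) ⊆ K[x_1,…,x_n] has linear quotients. -/
open MvPolynomial

/-!
Order the squarefree generators `x_S` of `HS_k(I(G))` lexicographically.  Since the forest `Gᶜ`
has no triangles and `1, …, n` is a perfect elimination order of `Gᶜ`, every vertex has at most
one later non-neighbour in `G`.  This gives an exchange property of the supports: if `T` precedes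
`S` and `t ∈ T` is the least element of `S ∆ T`, then some `s > t` of `S` can be traded for `t`,
and `S - s + t` is again a support, preceding `S`.  So `x_t` lies in the colon ideal of the earlier
generators by `x_S`, and these variables generate it.
-/

open Finset

section Squarefree

variable {σ : Type*}

noncomputable def squarefreeExp (S : Finset σ) : σ →₀ ℕ := ∑ i ∈ S, Finsupp.single i 1

theorem squarefreeExp_apply [DecidableEq σ] (S : Finset σ) (i : σ) :
    squarefreeExp S i = if i ∈ S then 1 else 0 := by
  simp [squarefreeExp, Finsupp.finsetSum_apply, Finsupp.single_apply]

theorem squarefreeExp_le_squarefreeExp [DecidableEq σ] {S T : Finset σ} :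
    squarefreeExp S ≤ squarefreeExp T ↔ S ⊆ T := by
  refine ⟨fun h i hi => by_contra fun hiT => ?_, fun h i => ?_⟩
  · simpa [squarefreeExp_apply, hi, hiT] using h i
  · simp only [squarefreeExp_apply]
    split_ifs with hS hT <;> first | omega | exact absurd (h hS) hT

theorem squarefreeExp_le_add_single [DecidableEq σ] {S S' : Finset σ} {t : σ}
    (h : S' ⊆ insert t S) :
    squarefreeExp S' ≤ squarefreeExp S + Finsupp.single t 1 := by
  intro i
  have := squarefreeExp_le_squarefreeExp.2 h i
  rcases eq_or_ne i t with rfl | hit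
  · simp only [squarefreeExp_apply, Finsupp.add_apply, Finsupp.single_eq_same] at this ⊢
    split_ifs <;> omega
  · simpa [squarefreeExp_apply, hit] using this

theorem monomial_squarefreeExp {R : Type*} [CommSemiring R] (S : Finset σ) :
    monomial (squarefreeExp S) (1 : R) = ∏ i ∈ S, X i :=
  monomial_sum_one S _

end Squarefree

section LinearQuotients

variable {K : Type*} [Field K] {n : ℕ}

theorem genByVars_colon_span_monomial {s : Set (Fin n →₀ ℕ)} {b : Fin n →₀ ℕ}
    (h : ∀ c ∈ s, ∃ t, b t < c t ∧ ∃ c' ∈ s, c' ≤ b + Finsupp.single t 1) :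
    genByVars ((Ideal.span ((fun c => monomial c (1 : K)) '' s)).colon
      (Ideal.span {monomial b (1 : K)})) := by
  refine ⟨{t | ∃ c' ∈ s, c' ≤ b + Finsupp.single t 1}, le_antisymm ?_ ?_⟩
  · intro p hp
    rw [Ideal.mem_colon_span_singleton, mem_ideal_span_monomial_image] at hp
    rw [mem_ideal_span_X_image]
    intro d hd
    have hdb : d + b ∈ (p * monomial b 1).support := by
      rwa [mem_support_iff, coeff_mul_monomial, mul_one, ← mem_support_iff]
    obtain ⟨c, hc, hcd⟩ := hp _ hdb
    obtain ⟨t, hbt, hT⟩ := h c hc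
    have := hcd t
    exact ⟨t, hT, by simp only [Finsupp.add_apply] at this; omega⟩
  · rw [Ideal.span_le]
    rintro _ ⟨t, ⟨c', hc', hle⟩, rfl⟩
    rw [SetLike.mem_coe, Ideal.mem_colon_span_singleton, X, monomial_mul, one_mul, add_comm]
    exact mem_ideal_span_monomial_image.2 fun _ hx =>
      ⟨c', hc', mem_singleton.1 (support_monomial_subset hx) ▸ hle⟩

theorem hasLinearQuotients_span_range_monomial {m : ℕ} (u : Fin m → Fin n →₀ ℕ)
    (hanti : ∀ i j, u i ≤ u j → i = j)
    (hexch : ∀ i j, j < i → ∃ t, u i t < u j t ∧ ∃ l < i, u l ≤ u i + Finsupp.single t 1) :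
    HasLinearQuotients (Ideal.span (Set.range fun i => monomial (u i) (1 : K))) := by
  refine ⟨m, fun i => monomial (u i) 1, fun i => ⟨u i, rfl⟩, ?_, rfl, fun i => ?_⟩
  · intro i j hij hdvd
    rw [monomial_dvd_monomial] at hdvd
    exact hij (hanti i j (hdvd.1.resolve_left one_ne_zero))
  · rw [← Set.image_image (fun c => monomial c (1 : K)) u]
    apply genByVars_colon_span_monomial
    rintro _ ⟨j, hj, rfl⟩
    obtain ⟨t, ht, l, hl, hle⟩ := hexch i j hj
    exact ⟨t, ht, u l, ⟨l, hl, rfl⟩, hle⟩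

theorem hasLinearQuotients_span_prod_X {ι : Type*} [LinearOrder ι]
    (key : Finset (Fin n) ≃ ι) (F : Finset (Finset (Fin n))) (d : ℕ) (hcard : ∀ S ∈ F, #S = d)
    (hexch : ∀ S ∈ F, ∀ T ∈ F, key T < key S →
      ∃ t ∈ T, t ∉ S ∧ ∃ S' ∈ F, key S' < key S ∧ S' ⊆ insert t S) :
    HasLinearQuotients (Ideal.span ((fun S => ∏ i ∈ S, (X i : MvPolynomial (Fin n) K)) '' F)) := by
  set e := (F.map key.toEmbedding).orderEmbOfFin rfl
  set A := fun i => key.symm (e i)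
  have hA : ∀ i, A i ∈ F := fun i => mem_map_equiv.1 (orderEmbOfFin_mem _ _ i)
  have hkey : ∀ i, key (A i) = e i := fun i => key.apply_symm_apply _
  have hrange : Set.range A = F := by
    ext S
    refine ⟨fun ⟨i, hi⟩ => hi ▸ hA i, fun hS => ?_⟩
    obtain ⟨i, hi⟩ : key S ∈ Set.range e := by
      rw [range_orderEmbOfFin]; exact mem_map_of_mem _ hS
    exact ⟨i, by simp [A, hi]⟩
  rw [← hrange, ← Set.range_comp]
  simp only [Function.comp_def, ← monomial_squarefreeExp]
  apply hasLinearQuotients_span_range_monomial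
  · intro i j hij
    rw [squarefreeExp_le_squarefreeExp] at hij
    have : A i = A j := eq_of_subset_of_card_le hij (by rw [hcard _ (hA i), hcard _ (hA j)])
    exact e.injective (by rw [← hkey, ← hkey, this])
  · intro i j hji
    obtain ⟨t, htT, htS, S', hS', hlt, hsub⟩ :=
      hexch (A i) (hA i) (A j) (hA j) (by rw [hkey, hkey]; exact e.strictMono hji)
    obtain ⟨l, rfl⟩ : S' ∈ Set.range A := hrange ▸ hS'
    refine ⟨t, by simp [squarefreeExp_apply, htT, htS], l, ?_, squarefreeExp_le_add_single hsub⟩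
    rwa [hkey, hkey, e.lt_iff_lt] at hlt

end LinearQuotients

section Lex

variable {α : Type*} [LinearOrder α]

/-- Lexicographic order on finsets: the finset containing the least element of the symmetric
difference comes first.  This is the reverse of the colex order for the reversed order on `α`. -/
def lexKey : Finset α ≃ (Colex (Finset αᵒᵈ))ᵒᵈ :=
  (Equiv.finsetCongr OrderDual.toDual).trans (toColex.trans OrderDual.toDual)

theorem lexKey_lt_lexKey {S T : Finset α} :
    lexKey S < lexKey T ↔ ∃ t ∈ S, t ∉ T ∧ ∀ x ∈ T, x ∉ S → t < x := by
  simp [lexKey, Colex.toColex_lt_toColex_iff_exists_forall_lt]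

theorem lexKey_insert_erase_lt {S : Finset α} {s t : α} (htS : t ∉ S) (hts : t < s) :
    lexKey (insert t (S.erase s)) < lexKey S := by
  refine lexKey_lt_lexKey.2 ⟨t, mem_insert_self _ _, htS, fun x hxS hx => ?_⟩
  obtain rfl : x = s := by
    by_contra hxs
    exact hx (mem_insert_of_mem (mem_erase.2 ⟨hxs, hxS⟩))
  exact hts

end Lex

theorem natPEO.eq_of_adj_of_adj {n : ℕ} {H : SimpleGraph (Fin n)} (hPEO : natPEO H)
    (hH : H.CliqueFree 3) {a b c : Fin n} (hab : a < b) (hac : a < c) (hb : H.Adj a b)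
    (hc : H.Adj a c) : b = c := by
  by_contra hbc
  exact hH {a, b, c} (SimpleGraph.is3Clique_triple_iff.2 ⟨hb, hc, hPEO a b c hab hac hbc hb hc⟩)

section Exchange

variable {V : Type*} [LinearOrder V] {G : SimpleGraph V}

/-- The vertex sets `A ∪ B` of the generators `x_A x_B` of `HS_k(I(G))`, with `a = max A`. -/
def IsHSSupport (G : SimpleGraph V) (S : Finset V) : Prop :=
  ∃ a ∈ S, (∃ m ∈ S, a < m) ∧ ∀ b ∈ S, a < b → G.Adj a b

theorem exists_isHSSupport_insert_erase_of_lt_of_lt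
    (hU : ∀ ⦃a b c⦄, a < b → a < c → ¬G.Adj a b → ¬G.Adj a c → b = c) {S : Finset V}
    {t b c : V} (hb : b ∈ S) (hc : c ∈ S) (htb : t < b) (htc : t < c) (hbc : b ≠ c) :
    ∃ s ∈ S, t < s ∧ IsHSSupport G (insert t (S.erase s)) := by
  by_cases hf : ∃ f ∈ S, t < f ∧ ¬G.Adj t f
  · obtain ⟨f, hf, htf, hnadj⟩ := hf
    obtain ⟨m, hm, hmf, htm⟩ : ∃ m ∈ S, m ≠ f ∧ t < m := by
      by_cases hbf : b = f
      · exact ⟨c, hc, hbf ▸ hbc.symm, htc⟩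
      · exact ⟨b, hb, hbf, htb⟩
    refine ⟨f, hf, htf, t, mem_insert_self _ _,
      ⟨m, mem_insert_of_mem (mem_erase.2 ⟨hmf, hm⟩), htm⟩, fun x hx htx => ?_⟩
    have hxf : x ≠ f := (mem_erase.1 ((mem_insert.1 hx).resolve_left htx.ne')).1
    by_contra hnadj'
    exact hxf (hU htx htf hnadj' hnadj)
  · push Not at hf
    refine ⟨b, hb, htb, t, mem_insert_self _ _,
      ⟨c, mem_insert_of_mem (mem_erase.2 ⟨hbc.symm, hc⟩), htc⟩, fun x hx htx => ?_⟩
    exact hf x (mem_of_mem_erase ((mem_insert.1 hx).resolve_left htx.ne')) htx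

theorem exists_isHSSupport_insert_erase
    (hU : ∀ ⦃a b c⦄, a < b → a < c → ¬G.Adj a b → ¬G.Adj a c → b = c) {S T : Finset V}
    (hcard : #T = #S) (hT : IsHSSupport G T) {t : V} (htT : t ∈ T) (htS : t ∉ S)
    (hlt : ∀ x ∈ S, x ∉ T → t < x) :
    ∃ s ∈ S, t < s ∧ IsHSSupport G (insert t (S.erase s)) := by
  obtain ⟨M, hMS, hMT⟩ : ∃ M ∈ S, M ∉ T := by
    by_contra! h
    exact htS (eq_of_subset_of_card_le h hcard.le ▸ htT)
  by_cases htwo : ∃ c ∈ S, t < c ∧ c ≠ M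
  · obtain ⟨c, hc, htc, hcM⟩ := htwo
    exact exists_isHSSupport_insert_erase_of_lt_of_lt hU hc hMS htc (hlt M hMS hMT) hcM
  -- `M` is the only element of `S` above `t`, so `S \ T = {M}` and `T` is the exchanged set
  push Not at htwo
  refine ⟨M, hMS, hlt M hMS hMT, ?_⟩
  convert hT using 1
  refine eq_of_subset_of_card_le (fun x hx => ?_) ?_
  · rcases mem_insert.1 hx with rfl | hx
    · exact htT
    obtain ⟨hxM, hxS⟩ := mem_erase.1 hx
    by_contra hxT
    exact hxM (htwo x hxS (hlt x hxS hxT))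
  · rw [hcard, card_insert_of_notMem (fun h => htS (mem_of_mem_erase h)), card_erase_add_one hMS]

end Exchange

theorem HSgens_eq_image {K : Type*} [Field K] {n : ℕ} (G : SimpleGraph (Fin n)) (k : ℕ) :
    HSgens K G k = (fun S => ∏ i ∈ S, X i) '' {S | #S = k + 2 ∧ IsHSSupport G S} := by
  ext w
  constructor
  · rintro ⟨A, B, hA, ⟨b, hb⟩, hAB, hcard, ⟨a, haA, hmax, hadj⟩, rfl⟩
    refine ⟨A ∪ B, ⟨hcard, a, mem_union_left _ haA, ⟨b, mem_union_right _ hb, hAB a haA b hb⟩,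
      fun x hx hax => ?_⟩, prod_union (disjoint_left.2 fun x hxA hxB => ?_)⟩
    · rcases mem_union.1 hx with hx | hx
      · exact absurd (hmax x hx) hax.not_ge
      · exact hadj x hx
    · exact (hAB x hxA x hxB).false
  · rintro ⟨S, ⟨hcard, a, haS, ⟨m, hmS, ham⟩, hadj⟩, rfl⟩
    refine ⟨S.filter (· ≤ a), S.filter (a < ·), ⟨a, by simp [haS]⟩, ⟨m, by simp [hmS, ham]⟩,
      fun x hx y hy => (mem_filter.1 hx).2.trans_lt (mem_filter.1 hy).2, ?_,
      ⟨a, by simp [haS], fun x hx => (mem_filter.1 hx).2,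
        fun x hx => hadj x (mem_filter.1 hx).1 (mem_filter.1 hx).2⟩, ?_⟩
    · simpa [filter_union_right, le_or_gt] using hcard
    · rw [← prod_union (disjoint_filter.2 fun x _ hxa hax => hxa.not_gt hax)]
      simp [filter_union_right, le_or_gt]

theorem HS_k_linearQuotients_of_forest_complement_general
    {K : Type*} [Field K] {n : ℕ} (G : SimpleGraph (Fin n))
    (hforest : Gᶜ.IsAcyclic)
    (hPEO : natPEO Gᶜ) :
    ∀ k : ℕ, HasLinearQuotients (Ideal.span (HSgens K G k)) := by
  intro k
  classical
  have hU : ∀ ⦃a b c⦄, a < b → a < c → ¬G.Adj a b → ¬G.Adj a c → b = c :=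
    fun a b c hab hac hb hc => hPEO.eq_of_adj_of_adj (hforest.cliqueFree le_rfl) hab hac
      ((G.compl_adj a b).2 ⟨hab.ne, hb⟩) ((G.compl_adj a c).2 ⟨hac.ne, hc⟩)
  set F : Finset (Finset (Fin n)) := {S | #S = k + 2 ∧ IsHSSupport G S}
  have hF : {S | #S = k + 2 ∧ IsHSSupport G S} = (F : Set (Finset (Fin n))) := by
    ext; simp [F]
  rw [HSgens_eq_image, hF]
  refine hasLinearQuotients_span_prod_X lexKey F (k + 2) (fun S hS => (mem_filter.1 hS).2.1) ?_
  intro S hS T hT hTS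
  simp only [F, mem_filter, mem_univ, true_and] at hS hT
  obtain ⟨t, htT, htS, hlt⟩ := lexKey_lt_lexKey.1 hTS
  obtain ⟨s, hs, hts, hS'⟩ :=
    exists_isHSSupport_insert_erase hU (hT.1.trans hS.1.symm) hT.2 htT htS hlt
  refine ⟨t, htT, htS, insert t (S.erase s), ?_, lexKey_insert_erase_lt htS hts,
    insert_subset_insert _ (erase_subset _ _)⟩
  simp only [F, mem_filter, mem_univ, true_and]
  rw [card_insert_of_notMem (fun h => htS (mem_of_mem_erase h)), card_erase_add_one hs]
  exact ⟨hS.1, hS'⟩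

/-- **Theorem 3.1 (Ficarra–Herzog).**  Let `G` be a graph on `Fin n` such that `Gᶜ` is a
forest, the vertex set of every connected component of `Gᶜ` is a set of consecutive
integers, and the natural order is a perfect elimination order of `Gᶜ`.  Then every
homological shift ideal `HS_k(I(G))` has linear quotients. -/
theorem HS_k_linearQuotients_of_forest_complement
    {K : Type*} [Field K] {n : ℕ} (G : SimpleGraph (Fin n))
    (hforest : Gᶜ.IsAcyclic)
    (hconsec : ∀ u v w : Fin n, u ≤ v → v ≤ w → Gᶜ.Reachable u w → Gᶜ.Reachable u v)
    (hPEO : natPEO Gᶜ) :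
    ∀ k : ℕ, HasLinearQuotients (Ideal.span (HSgens K G k)) :=
  HS_k_linearQuotients_of_forest_complement_general G hforest hPEO
end
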